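/- arXiv:1811.11986 — 11 statements merged into one kernel-verified Lean document; each statement's English description precedes it below -/
import Mathlib

section
/- For any two decoding pairs (i1, j1) and (i2, j2) in D with i1 ≠ i2: i1 > i2 if and only if j1 > j2. (Corollary 1, ordering of decoding pairs.) -/
/-- MT `i` is connected to BS `j` iff `i - L ≤ j ≤ i` (truncated subtraction). -/
def Connected (L i j : ℕ) : Prop := i - L ≤ j ∧ j ≤ i

/-- `C` is a valid cell association for a `K`-user network with per-MT constraint `Nc`. -/
def IsCellAssoc (K Nc : ℕ) (C : ℕ → Finset ℕ) : Prop :=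
  ∀ i ∈ Finset.Icc 1 K, C i ⊆ Finset.Icc 1 K ∧ (C i).card ≤ Nc

/-- A combinatorial uplink zero-forcing scheme for the association `C`:
a finite set `D` of decoding pairs `(i, j)` (message `W i` decoded at BS `j`)
with a strict linear order `lt` on `D` such that
(a) every pair satisfies `j ∈ C i` and BS `j` is connected to MT `i`;
(b) distinct pairs differ in both coordinates;
(c) for pairs `(i,j), (i',j')` with `i ≠ i'`, if BS `j'` is connected to MT `i`
then `j' ∈ C i` and `(i,j)` precedes `(i',j')`. -/
structure UplinkScheme (K L : ℕ) (C : ℕ → Finset ℕ) where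
  D : Finset (ℕ × ℕ)
  lt : ℕ × ℕ → ℕ × ℕ → Prop
  lt_irrefl : ∀ p ∈ D, ¬ lt p p
  lt_trans : ∀ p ∈ D, ∀ q ∈ D, ∀ r ∈ D, lt p q → lt q r → lt p r
  lt_total : ∀ p ∈ D, ∀ q ∈ D, p ≠ q → lt p q ∨ lt q p
  mem_range : ∀ p ∈ D, p.1 ∈ Finset.Icc 1 K ∧ p.2 ∈ Finset.Icc 1 K
  assoc : ∀ p ∈ D, p.2 ∈ C p.1
  conn : ∀ p ∈ D, Connected L p.1 p.2
  distinct : ∀ p ∈ D, ∀ q ∈ D, p ≠ q → p.1 ≠ q.1 ∧ p.2 ≠ q.2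
  zf : ∀ p ∈ D, ∀ q ∈ D, p.1 ≠ q.1 → Connected L p.1 q.2 → q.2 ∈ C p.1 ∧ lt p q

/-- MT `i` is active in the uplink scheme: some pair `(i, j)` is in `D`. -/
def UplinkScheme.ActiveMT {K L : ℕ} {C : ℕ → Finset ℕ} (S : UplinkScheme K L C) (i : ℕ) : Prop :=
  i ∈ S.D.image Prod.fst

/-- BS `j` is active in the uplink scheme: some pair `(i, j)` is in `D`. -/
def UplinkScheme.ActiveBS {K L : ℕ} {C : ℕ → Finset ℕ} (S : UplinkScheme K L C) (j : ℕ) : Prop :=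
  j ∈ S.D.image Prod.snd

/-! If `i₂ < i₁` but `j₁ < j₂`, the two decoding pairs cross: BS `j₂` is then connected to MT `i₁`
and BS `j₁` to MT `i₂`, so the zero-forcing condition forces each pair to precede the other,
contradicting the asymmetry of the decoding order. -/

theorem Connected.cross {L a₁ b₁ a₂ b₂ : ℕ} (h₁ : Connected L a₁ b₁) (h₂ : Connected L a₂ b₂)
    (ha : a₂ ≤ a₁) (hb : b₁ ≤ b₂) : Connected L a₁ b₂ ∧ Connected L a₂ b₁ := by
  unfold Connected at *
  omega

namespace UplinkScheme

variable {K L : ℕ} {C : ℕ → Finset ℕ} (S : UplinkScheme K L C)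

theorem lt_asymm {p q : ℕ × ℕ} (hp : p ∈ S.D) (hq : q ∈ S.D) (hpq : S.lt p q) : ¬ S.lt q p :=
  fun hqp => S.lt_irrefl p hp (S.lt_trans p hp q hq p hp hpq hqp)

theorem snd_lt_snd_of_fst_lt {p q : ℕ × ℕ} (hp : p ∈ S.D) (hq : q ∈ S.D) (h : q.1 < p.1) :
    q.2 < p.2 := by
  by_contra! hle
  have hne : p.1 ≠ q.1 := h.ne'
  obtain ⟨hpq, hqp⟩ := (S.conn p hp).cross (S.conn q hq) h.le hle
  exact S.lt_asymm hp hq (S.zf p hp q hq hne hpq).2 (S.zf q hq p hp hne.symm hqp).2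

end UplinkScheme

theorem decoding_pairs_ordering_general (K L : ℕ)
    (C : ℕ → Finset ℕ) (S : UplinkScheme K L C)
    (i1 j1 i2 j2 : ℕ) (h1 : (i1, j1) ∈ S.D) (h2 : (i2, j2) ∈ S.D) (hne : i1 ≠ i2) :
    (i2 < i1 ↔ j2 < j1) := by
  refine ⟨S.snd_lt_snd_of_fst_lt h1 h2, fun hj => ?_⟩
  by_contra! hi
  exact (S.snd_lt_snd_of_fst_lt h2 h1 (hi.lt_of_ne hne)).not_gt hj

/-- Corollary 1 (ordering of decoding pairs): for two decoding pairs with distinct MT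
indices, `i1 > i2` if and only if `j1 > j2`. -/
theorem decoding_pairs_ordering (K L Nc : ℕ) (hK : 0 < K) (hL : 0 < L) (hNc : 0 < Nc)
    (C : ℕ → Finset ℕ) (hC : IsCellAssoc K Nc C) (S : UplinkScheme K L C)
    (i1 j1 i2 j2 : ℕ) (h1 : (i1, j1) ∈ S.D) (h2 : (i2, j2) ∈ S.D) (hne : i1 ≠ i2) :
    (i2 < i1 ↔ j2 < j1) :=
  decoding_pairs_ordering_general K L C S i1 j1 i2 j2 h1 h2 hne
end

section
/- For every set 𝓛 of L+1 consecutive indices {a, a+1, …, a+L} ⊆ {1,…,K}, the number of decoding pairs (i,j) ∈ D with both i ∈ 𝓛 and j ∈ 𝓛 is at most N_c. (Lemma 3: at most N_c messages with indices in 𝓛 can be decoded at base stations with indices in 𝓛.) -/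
/-! The pair `p` of the window with the largest message index sees every base station of the
window, so by the zero-forcing condition all base stations decoding in the window lie in
`C p.1`; as distinct pairs use distinct base stations, there are at most `|C p.1| ≤ Nc` of them. -/

theorem connected_of_mem_Icc {L a i j : ℕ} (hi : i ∈ Finset.Icc a (a + L))
    (hj : j ∈ Finset.Icc a (a + L)) (hji : j ≤ i) : Connected L i j := by
  simp only [Finset.mem_Icc] at hi hj
  exact ⟨by omega, hji⟩

namespace UplinkScheme

variable {K L : ℕ} {C : ℕ → Finset ℕ} (S : UplinkScheme K L C)

theorem snd_injOn : Set.InjOn Prod.snd (S.D : Set (ℕ × ℕ)) := fun p hp q hq hpq => by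
  by_contra hne
  exact (S.distinct p hp q hq hne).2 hpq

theorem snd_mem_assoc {p q : ℕ × ℕ} (hp : p ∈ S.D) (hq : q ∈ S.D)
    (hconn : Connected L p.1 q.2) : q.2 ∈ C p.1 := by
  by_cases hpq : p.1 = q.1
  · obtain rfl : p = q := by
      by_contra hne
      exact (S.distinct p hp q hq hne).1 hpq
    exact S.assoc p hp
  · exact (S.zf p hp q hq hpq hconn).1

theorem card_le_card_assoc {F : Finset (ℕ × ℕ)} (hF : F ⊆ S.D) {p : ℕ × ℕ} (hp : p ∈ S.D)
    (hconn : ∀ q ∈ F, Connected L p.1 q.2) : F.card ≤ (C p.1).card :=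
  calc F.card = (F.image Prod.snd).card :=
        (Finset.card_image_of_injOn (S.snd_injOn.mono (by exact_mod_cast hF))).symm
    _ ≤ (C p.1).card := Finset.card_le_card <| by
        simp only [Finset.image_subset_iff]
        exact fun q hq => S.snd_mem_assoc hp (hF hq) (hconn q hq)

end UplinkScheme

theorem subnetwork_decoding_bound_general (K L Nc : ℕ)
    (C : ℕ → Finset ℕ) (hC : IsCellAssoc K Nc C) (S : UplinkScheme K L C)
    (a : ℕ) :
    (S.D.filter (fun p => p.1 ∈ Finset.Icc a (a + L) ∧ p.2 ∈ Finset.Icc a (a + L))).card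
      ≤ Nc := by
  set F := S.D.filter (fun p => p.1 ∈ Finset.Icc a (a + L) ∧ p.2 ∈ Finset.Icc a (a + L))
  rcases F.eq_empty_or_nonempty with hempty | hne
  · simp [hempty]
  obtain ⟨p, hpF, hmax⟩ := F.exists_max_image Prod.fst hne
  have hpD : p ∈ S.D := (Finset.mem_filter.mp hpF).1
  have hconn : ∀ q ∈ F, Connected L p.1 q.2 := fun q hq =>
    connected_of_mem_Icc (Finset.mem_filter.mp hpF).2.1 (Finset.mem_filter.mp hq).2.2
      (((S.conn q (Finset.mem_filter.mp hq).1).2).trans (hmax q hq))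
  calc F.card ≤ (C p.1).card := S.card_le_card_assoc (Finset.filter_subset _ _) hpD hconn
    _ ≤ Nc := (hC p.1 (S.mem_range p hpD).1).2

/-- Lemma 3: for any set of `L + 1` consecutive indices `{a, …, a + L} ⊆ {1,…,K}`,
at most `Nc` messages with indices in the set are decoded at base stations with
indices in the set. -/
theorem subnetwork_decoding_bound (K L Nc : ℕ) (hK : 0 < K) (hL : 0 < L) (hNc : 0 < Nc)
    (C : ℕ → Finset ℕ) (hC : IsCellAssoc K Nc C) (S : UplinkScheme K L C)
    (a : ℕ) (ha : 1 ≤ a) (haK : a + L ≤ K) :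
    (S.D.filter (fun p => p.1 ∈ Finset.Icc a (a + L) ∧ p.2 ∈ Finset.Icc a (a + L))).card
      ≤ Nc :=
  subnetwork_decoding_bound_general K L Nc C hC S a
end

section
/- If mobile terminal i is active, then the number of active base stations j with i − L ≤ j ≤ i (i.e., active base stations connected to MT i) is at most N_c. (A message's interference cannot be canceled at N_c or more receivers; used in the converse for N_c = L.) -/
namespace UplinkScheme

variable {K L : ℕ} {C : ℕ → Finset ℕ} (S : UplinkScheme K L C)

theorem eq_of_fst_eq {p q : ℕ × ℕ} (hp : p ∈ S.D) (hq : q ∈ S.D) (h : p.1 = q.1) : p = q := by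
  by_contra hne
  exact (S.distinct p hp q hq hne).1 h

theorem mem_Icc_of_activeMT {i : ℕ} (hi : S.ActiveMT i) : i ∈ Finset.Icc 1 K := by
  obtain ⟨p, hp, rfl⟩ := Finset.mem_image.mp hi
  exact (S.mem_range p hp).1

/-- Either `j` decodes `W i` itself, or `W i` is interference at `j` and must be cancelled there. -/
theorem mem_assoc_of_activeBS {i j : ℕ} (hi : S.ActiveMT i) (hj : S.ActiveBS j)
    (hij : Connected L i j) : j ∈ C i := by
  obtain ⟨p, hp, rfl⟩ := Finset.mem_image.mp hi
  obtain ⟨q, hq, rfl⟩ := Finset.mem_image.mp hj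
  by_cases hpq : p.1 = q.1
  · rw [S.eq_of_fst_eq hp hq hpq]
    exact S.assoc q hq
  · exact (S.zf p hp q hq hpq hij).1

theorem filter_activeBS_subset_assoc {i : ℕ} (hi : S.ActiveMT i) :
    (Finset.Icc (i - L) i).filter (· ∈ S.D.image Prod.snd) ⊆ C i := by
  intro j hj
  rw [Finset.mem_filter, Finset.mem_Icc] at hj
  exact S.mem_assoc_of_activeBS hi hj.2 hj.1

end UplinkScheme

theorem active_BS_around_active_MT_general (K L Nc : ℕ)
    (C : ℕ → Finset ℕ) (hC : IsCellAssoc K Nc C) (S : UplinkScheme K L C)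
    (i : ℕ) (hi : S.ActiveMT i) :
    ((Finset.Icc (i - L) i).filter (fun j => j ∈ S.D.image Prod.snd)).card ≤ Nc :=
  (Finset.card_le_card (S.filter_activeBS_subset_assoc hi)).trans (hC i (S.mem_Icc_of_activeMT hi)).2

/-- If MT `i` is active, then at most `Nc` of the base stations connected to it
(those with `i - L ≤ j ≤ i`) are active. -/
theorem active_BS_around_active_MT (K L Nc : ℕ) (hK : 0 < K) (hL : 0 < L) (hNc : 0 < Nc)
    (C : ℕ → Finset ℕ) (hC : IsCellAssoc K Nc C) (S : UplinkScheme K L C)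
    (i : ℕ) (hi : S.ActiveMT i) :
    ((Finset.Icc (i - L) i).filter (fun j => j ∈ S.D.image Prod.snd)).card ≤ Nc :=
  active_BS_around_active_MT_general K L Nc C hC S i hi
end

section
/- Suppose N_c ≤ L. If the N_c + 1 consecutive base stations j, j+1, …, j+N_c are all active, then every mobile terminal i connected to all of them (i.e., every i with j + N_c ≤ i ≤ j + L) is inactive. (If N_c + 1 consecutive receivers are active, the transmitter connected to all these receivers must be inactive.) -/
/-! Zero-forcing forces an active MT `i` to have every active BS connected to it in its
cell `C i`; the `Nc + 1` consecutive active BSs are all connected to `i`, but `|C i| ≤ Nc`. -/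

namespace UplinkScheme

variable {K L : ℕ} {C : ℕ → Finset ℕ} (S : UplinkScheme K L C)

theorem mem_assoc_of_activeMT_of_activeBS {i b : ℕ} (hi : S.ActiveMT i) (hb : S.ActiveBS b)
    (hib : Connected L i b) : b ∈ C i := by
  obtain ⟨p, hp, rfl⟩ := Finset.mem_image.mp hi
  obtain ⟨q, hq, rfl⟩ := Finset.mem_image.mp hb
  by_cases hpq : p = q
  · exact hpq ▸ S.assoc p hp
  by_cases hfst : p.1 = q.1
  · exact absurd hfst (S.distinct p hp q hq hpq).1
  · exact (S.zf p hp q hq hfst hib).1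

theorem card_le_of_forall_activeBS_connected {Nc : ℕ} (hC : IsCellAssoc K Nc C) {i : ℕ}
    (hi : S.ActiveMT i) {B : Finset ℕ} (hB : ∀ b ∈ B, S.ActiveBS b ∧ Connected L i b) :
    B.card ≤ Nc := by
  obtain ⟨p, hp, rfl⟩ := Finset.mem_image.mp hi
  calc B.card ≤ (C p.1).card :=
        Finset.card_le_card fun b hb => S.mem_assoc_of_activeMT_of_activeBS hi (hB b hb).1 (hB b hb).2
    _ ≤ Nc := (hC p.1 (S.mem_range p hp).1).2

end UplinkScheme

theorem connected_of_mem_Icc_s5 {L Nc i j b : ℕ} (hi1 : j + Nc ≤ i) (hi2 : i ≤ j + L)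
    (hb : b ∈ Finset.Icc j (j + Nc)) : Connected L i b := by
  rw [Finset.mem_Icc] at hb
  unfold Connected
  omega

theorem transmitter_inactive_of_consecutive_active_BS_general (K L Nc : ℕ)
    (C : ℕ → Finset ℕ) (hC : IsCellAssoc K Nc C) (S : UplinkScheme K L C)
    (j : ℕ)
    (hact : ∀ b ∈ Finset.Icc j (j + Nc), S.ActiveBS b)
    (i : ℕ) (hi1 : j + Nc ≤ i) (hi2 : i ≤ j + L) :
    ¬ S.ActiveMT i := by
  intro hi
  have hcard := S.card_le_of_forall_activeBS_connected hC hi fun b hb =>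
    ⟨hact b hb, connected_of_mem_Icc_s5 hi1 hi2 hb⟩
  rw [Nat.card_Icc] at hcard
  omega

/-- If `Nc ≤ L` and the `Nc + 1` consecutive base stations `j, j+1, …, j+Nc` are all
active, then every mobile terminal connected to all of them (every `i` with
`j + Nc ≤ i ≤ j + L`, `i ≤ K`) is inactive. -/
theorem transmitter_inactive_of_consecutive_active_BS (K L Nc : ℕ)
    (hK : 0 < K) (hL : 0 < L) (hNc : 0 < Nc) (hNcL : Nc ≤ L)
    (C : ℕ → Finset ℕ) (hC : IsCellAssoc K Nc C) (S : UplinkScheme K L C)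
    (j : ℕ) (hj : 1 ≤ j) (hjK : j + Nc ≤ K)
    (hact : ∀ b ∈ Finset.Icc j (j + Nc), S.ActiveBS b)
    (i : ℕ) (hi1 : j + Nc ≤ i) (hi2 : i ≤ j + L) (hiK : i ≤ K) :
    ¬ S.ActiveMT i :=
  transmitter_inactive_of_consecutive_active_BS_general K L Nc C hC S j hact i hi1 hi2
end

section
/- Suppose N_c = L. If all L + 2 base stations with indices in a block of L + 2 consecutive indices {a, …, a+L+1} ⊆ {1,…,K} are active, then at most N_c = L of the L + 2 mobile terminals with indices in that block are active. (Step Γ_BS ⊆ Φ_MT in the converse proof of the uplink puDoF for N_c = L.) -/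
/-!
If MT `i` is active and every BS it is connected to is active, then each of those `L + 1` base
stations decodes some message, which is either `W i` itself or one that `i` must zero-force
(condition (c)); either way the BS lies in `C i`, exceeding the budget `Nc = L`. In a block of
`L + 2` active base stations, every MT `i ≥ a + L` of the block sees only base stations of the
block, so only the `L` terminals `a, …, a + L - 1` can be active.
-/

namespace UplinkScheme

variable {K L : ℕ} {C : ℕ → Finset ℕ} (S : UplinkScheme K L C)

theorem Icc_subset_assoc_of_forall_activeBS {i : ℕ} (hi : S.ActiveMT i)
    (hbs : ∀ j, Connected L i j → S.ActiveBS j) : Finset.Icc (i - L) i ⊆ C i := by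
  obtain ⟨p, hp, rfl⟩ := Finset.mem_image.mp hi
  intro j hj
  obtain ⟨q, hq, rfl⟩ := Finset.mem_image.mp (hbs j (Finset.mem_Icc.mp hj))
  by_cases hpq : p.1 = q.1
  · exact hpq ▸ S.assoc q hq
  · exact (S.zf p hp q hq hpq (Finset.mem_Icc.mp hj)).1

theorem exists_connected_not_activeBS (hC : IsCellAssoc K L C) {i : ℕ}
    (hi : S.ActiveMT i) (hLi : L ≤ i) :
    ∃ j, Connected L i j ∧ ¬ S.ActiveBS j := by
  by_contra! hbs
  obtain ⟨p, hp, rfl⟩ := Finset.mem_image.mp hi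
  have hcard := (Finset.card_le_card (S.Icc_subset_assoc_of_forall_activeBS hi hbs)).trans
    (hC p.1 (S.mem_range p hp).1).2
  rw [Nat.card_Icc] at hcard
  omega

end UplinkScheme

theorem all_BS_active_implies_few_MT_active_general (K L Nc : ℕ)
    (hNc : Nc = L)
    (C : ℕ → Finset ℕ) (hC : IsCellAssoc K Nc C) (S : UplinkScheme K L C)
    (a : ℕ)
    (hact : ∀ b ∈ Finset.Icc a (a + L + 1), S.ActiveBS b) :
    ((Finset.Icc a (a + L + 1)).filter (fun i => i ∈ S.D.image Prod.fst)).card ≤ Nc := by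
  subst Nc
  have hsub : (Finset.Icc a (a + L + 1)).filter (fun i => i ∈ S.D.image Prod.fst) ⊆
      Finset.Ico a (a + L) := by
    intro i hi
    obtain ⟨hblock, hactive⟩ := Finset.mem_filter.mp hi
    rw [Finset.mem_Icc] at hblock
    rw [Finset.mem_Ico]
    refine ⟨hblock.1, Nat.lt_of_not_le fun hiL => ?_⟩
    obtain ⟨j, ⟨hj₁, hj₂⟩, hj⟩ := S.exists_connected_not_activeBS hC hactive (by omega)
    exact hj (hact j (Finset.mem_Icc.mpr ⟨by omega, by omega⟩))
  simpa using Finset.card_le_card hsub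

/-- For `Nc = L`: if all `L + 2` base stations of a block of `L + 2` consecutive
indices are active, then at most `Nc = L` of the mobile terminals with indices in
the block are active. -/
theorem all_BS_active_implies_few_MT_active (K L Nc : ℕ)
    (hK : 0 < K) (hL : 0 < L) (hNc : Nc = L)
    (C : ℕ → Finset ℕ) (hC : IsCellAssoc K Nc C) (S : UplinkScheme K L C)
    (a : ℕ) (ha : 1 ≤ a) (haK : a + L + 1 ≤ K)
    (hact : ∀ b ∈ Finset.Icc a (a + L + 1), S.ActiveBS b) :
    ((Finset.Icc a (a + L + 1)).filter (fun i => i ∈ S.D.image Prod.fst)).card ≤ Nc :=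
  all_BS_active_implies_few_MT_active_general K L Nc hNc C hC S a hact
end

section
/- If N_c ≥ L + 1, then there exist a cell association C_1,…,C_K with |C_i| ≤ N_c for all i and a combinatorial uplink zero-forcing scheme for it in which every mobile terminal is active, i.e., |D| = K. (Achievability of uplink per-user DoF equal to 1 in Theorem 1, via associating each MT with all L + 1 base stations connected to it and decoding from the highest index downwards.) -/
/-! Associate each MT `i` with all BSs `i - L, …, i` that hear it and decode `W i` at BS `i`,
in decreasing order of `i`. Any other BS `i' < i` hearing MT `i` is associated with it and decodes
its own message only after `W i`, so the interference of MT `i` can be cancelled there. -/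

open Finset

def fullAssoc (K L i : ℕ) : Finset ℕ := Icc 1 K ∩ Icc (i - L) i

theorem mem_fullAssoc {K L i j : ℕ} : j ∈ fullAssoc K L i ↔ j ∈ Icc 1 K ∧ Connected L i j := by
  simp only [fullAssoc, mem_inter, mem_Icc, Connected]

theorem card_fullAssoc_le (K L i : ℕ) : (fullAssoc K L i).card ≤ L + 1 :=
  calc (fullAssoc K L i).card ≤ (Icc (i - L) i).card := card_le_card inter_subset_right
    _ = i + 1 - (i - L) := Nat.card_Icc _ _
    _ ≤ L + 1 := by omega

theorem isCellAssoc_fullAssoc {K L Nc : ℕ} (hNc : L + 1 ≤ Nc) :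
    IsCellAssoc K Nc (fullAssoc K L) :=
  fun i _ => ⟨inter_subset_left, (card_fullAssoc_le K L i).trans hNc⟩

theorem eq_diag_of_mem_diag {α : Type*} [DecidableEq α] {s : Finset α} {p : α × α} (hp : p ∈ s.diag) :
    ∃ i ∈ s, p = (i, i) := by
  obtain ⟨hi, hdiag⟩ := mem_diag.1 hp
  exact ⟨p.1, hi, Prod.ext rfl hdiag.symm⟩

def diagonalScheme (K L : ℕ) (C : ℕ → Finset ℕ)
    (hC : ∀ i ∈ Icc 1 K, ∀ j ∈ Icc 1 K, Connected L i j → j ∈ C i) : UplinkScheme K L C where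
  D := (Icc 1 K).diag
  lt p q := q.1 < p.1
  lt_irrefl _ _ := lt_irrefl _
  lt_trans _ _ _ _ _ _ hpq hqr := hqr.trans hpq
  lt_total p hp q hq hne := by
    obtain ⟨i, -, rfl⟩ := eq_diag_of_mem_diag hp
    obtain ⟨j, -, rfl⟩ := eq_diag_of_mem_diag hq
    exact (lt_or_gt_of_ne fun h : i = j => hne (h ▸ rfl)).symm
  mem_range p hp := by
    obtain ⟨i, hi, rfl⟩ := eq_diag_of_mem_diag hp
    exact ⟨hi, hi⟩
  assoc p hp := by
    obtain ⟨i, hi, rfl⟩ := eq_diag_of_mem_diag hp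
    exact hC i hi i hi ⟨Nat.sub_le i L, le_rfl⟩
  conn p hp := by
    obtain ⟨i, -, rfl⟩ := eq_diag_of_mem_diag hp
    exact ⟨Nat.sub_le i L, le_rfl⟩
  distinct p hp q hq hne := by
    obtain ⟨i, -, rfl⟩ := eq_diag_of_mem_diag hp
    obtain ⟨j, -, rfl⟩ := eq_diag_of_mem_diag hq
    have hij : i ≠ j := fun h => hne (h ▸ rfl)
    exact ⟨hij, hij⟩
  zf p hp q hq hne hconn := by
    obtain ⟨i, hi, rfl⟩ := eq_diag_of_mem_diag hp
    obtain ⟨j, hj, rfl⟩ := eq_diag_of_mem_diag hq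
    exact ⟨hC i hi j hj hconn, lt_of_le_of_ne hconn.2 hne.symm⟩

theorem card_diagonalScheme (K L : ℕ) (C : ℕ → Finset ℕ)
    (hC : ∀ i ∈ Icc 1 K, ∀ j ∈ Icc 1 K, Connected L i j → j ∈ C i) :
    (diagonalScheme K L C hC).D.card = K := by
  simp only [diagonalScheme, diag_card, Nat.card_Icc, Nat.add_sub_cancel]

theorem uplink_full_dof_achievable_general (K L Nc : ℕ)
    (hNc : L + 1 ≤ Nc) :
    ∃ C : ℕ → Finset ℕ, IsCellAssoc K Nc C ∧
      ∃ S : UplinkScheme K L C, S.D.card = K :=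
  have hC : ∀ i ∈ Icc 1 K, ∀ j ∈ Icc 1 K, Connected L i j → j ∈ fullAssoc K L i :=
    fun _ _ _ hj hconn => mem_fullAssoc.2 ⟨hj, hconn⟩
  ⟨fullAssoc K L, isCellAssoc_fullAssoc hNc, diagonalScheme K L _ hC, card_diagonalScheme K L _ hC⟩

/-- Achievability of uplink per-user DoF 1 (Theorem 1, `Nc ≥ L + 1`): there is a cell
association and an uplink zero-forcing scheme in which every mobile terminal is active. -/
theorem uplink_full_dof_achievable (K L Nc : ℕ) (hK : 0 < K) (hL : 0 < L)
    (hNc : L + 1 ≤ Nc) :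
    ∃ C : ℕ → Finset ℕ, IsCellAssoc K Nc C ∧
      ∃ S : UplinkScheme K L C, S.D.card = K :=
  uplink_full_dof_achievable_general K L Nc hNc
end

section
/- If 2·N_c ≥ L and N_c ≤ L, then there exist a cell association C_1,…,C_K with |C_i| ≤ N_c for all i and a combinatorial uplink zero-forcing scheme for it with at least (N_c + 1)·⌊K/(L+2)⌋ decoding pairs. (Achievability part of Theorem 1 for the range L/2 ≤ N_c ≤ L: uplink per-user DoF (N_c+1)/(L+2) is achievable, decoding N_c + 1 words in each subnetwork of L + 2 consecutive users.) -/
/-!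
Cut the users into blocks of `L + 2` consecutive indices. In the block with offset `s`, MT `s + k`
is decoded at BS `s + k` for `k ≤ Nc`, and the last MT `s + L + 2` at BS `s + Nc + 1`; messages
are decoded in decreasing order of the MT index. Every other used BS that an active MT sees
carries the message of a smaller MT, so associating each active MT with all used BSs it sees
gives a zero-forcing scheme with `Nc + 1` pairs per block. The budget holds: MT `s + k` sees
`k` used BSs of its own block and `Nc - k` of the previous one, and MT `s + L + 2` sees
`s + 2, …, s + Nc + 1`.
-/

open Finset

def assocOf (L : ℕ) (D : Finset (ℕ × ℕ)) (i : ℕ) : Finset ℕ :=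
  if i ∈ D.image Prod.fst then Icc (i - L) i ∩ D.image Prod.snd else ∅

section assocOf

variable {K L Nc : ℕ} {D : Finset (ℕ × ℕ)}

lemma mem_assocOf {p q : ℕ × ℕ} (hp : p ∈ D) (hq : q ∈ D) (hc : Connected L p.1 q.2) :
    q.2 ∈ assocOf L D p.1 := by
  rw [assocOf, if_pos (mem_image_of_mem _ hp)]
  exact mem_inter.2 ⟨mem_Icc.2 hc, mem_image_of_mem _ hq⟩

lemma isCellAssoc_assocOf (snd_mem : ∀ p ∈ D, p.2 ∈ Icc 1 K)
    (card_le : ∀ p ∈ D, (Icc (p.1 - L) p.1 ∩ D.image Prod.snd).card ≤ Nc) :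
    IsCellAssoc K Nc (assocOf L D) := by
  intro i _
  unfold assocOf
  split_ifs with hi
  · obtain ⟨p, hp, rfl⟩ := mem_image.1 hi
    refine ⟨fun j hj => ?_, card_le p hp⟩
    obtain ⟨q, hq, rfl⟩ := mem_image.1 (mem_inter.1 hj).2
    exact snd_mem q hq
  · simp

def UplinkScheme.ofDecreasingMT (D : Finset (ℕ × ℕ))
    (mem_range : ∀ p ∈ D, p.1 ∈ Icc 1 K ∧ p.2 ∈ Icc 1 K)
    (conn : ∀ p ∈ D, Connected L p.1 p.2)
    (injOn_fst : Set.InjOn Prod.fst (D : Set (ℕ × ℕ)))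
    (injOn_snd : Set.InjOn Prod.snd (D : Set (ℕ × ℕ)))
    (fst_lt : ∀ p ∈ D, ∀ q ∈ D, p.1 ≠ q.1 → Connected L p.1 q.2 → q.1 < p.1) :
    UplinkScheme K L (assocOf L D) where
  D := D
  lt p q := q.1 < p.1
  lt_irrefl _ _ := Nat.lt_irrefl _
  lt_trans _ _ _ _ _ _ hpq hqr := hqr.trans hpq
  lt_total _ hp _ hq hne := (Ne.lt_or_gt fun h => hne (injOn_fst hp hq h)).symm
  mem_range := mem_range
  assoc p hp := mem_assocOf hp hp (conn p hp)
  conn := conn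
  distinct _ hp _ hq hne := ⟨fun h => hne (injOn_fst hp hq h), fun h => hne (injOn_snd hp hq h)⟩
  zf p hp q hq hne hc := ⟨mem_assocOf hp hq hc, fst_lt p hp q hq hne hc⟩

end assocOf

lemma add_le_mul_of_lt {n b b' : ℕ} (h : b < b') : b * n + n ≤ b' * n := by
  simpa [Nat.succ_mul] using Nat.mul_le_mul_right n h

lemma block_eq {n b b' k k' : ℕ} (hk : k ∈ Icc 1 n) (hk' : k' ∈ Icc 1 n)
    (h : b * n + k = b' * n + k') : b = b' ∧ k = k' := by
  rw [mem_Icc] at hk hk'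
  rcases Nat.lt_trichotomy b b' with hb | rfl | hb
  · have := add_le_mul_of_lt (n := n) hb; omega
  · omega
  · have := add_le_mul_of_lt (n := n) hb; omega

lemma block_eq_or_succ_eq {L b b' m t : ℕ} (hm : m ∈ Icc 1 (L + 2)) (ht : t ∈ Icc 1 (L + 2))
    (hc : Connected L (b * (L + 2) + m) (b' * (L + 2) + t)) : b' = b ∨ b' + 1 = b := by
  rw [mem_Icc] at hm ht
  obtain ⟨hlo, hhi⟩ := hc
  rcases Nat.lt_trichotomy b' b with hb | rfl | hb
  · by_contra hne
    have := add_le_mul_of_lt (n := L + 2) (show b' + 1 < b by omega)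
    have := add_one_mul b' (L + 2)
    omega
  · exact .inl rfl
  · have := add_le_mul_of_lt (n := L + 2) hb; omega

def blockMT (L Nc k : ℕ) : ℕ := if k = Nc + 1 then L + 2 else k

def blockPair (L Nc : ℕ) (bk : ℕ × ℕ) : ℕ × ℕ :=
  (bk.1 * (L + 2) + blockMT L Nc bk.2, bk.1 * (L + 2) + bk.2)

def blockPairs (K L Nc : ℕ) : Finset (ℕ × ℕ) :=
  (range (K / (L + 2)) ×ˢ Icc 1 (Nc + 1)).image (blockPair L Nc)

section blockPairs

variable {K L Nc : ℕ}

lemma blockMT_mem_Icc (h : Nc ≤ L) {k : ℕ} (hk : k ∈ Icc 1 (Nc + 1)) :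
    blockMT L Nc k ∈ Icc k (L + 2) := by
  rw [mem_Icc] at hk ⊢
  unfold blockMT
  split_ifs <;> omega

lemma blockMT_injOn (h : Nc ≤ L) : Set.InjOn (blockMT L Nc) (Icc 1 (Nc + 1) : Set ℕ) := by
  intro k hk k' hk' hkk'
  simp only [coe_Icc, Set.mem_Icc] at hk hk'
  unfold blockMT at hkk'
  split_ifs at hkk' <;> omega

lemma blockMT_le_add (hNc : 0 < Nc) (k : ℕ) : blockMT L Nc k ≤ k + L := by
  unfold blockMT
  split_ifs <;> omega

lemma blockMT_le_blockMT {k k' : ℕ} (hk : k ≤ Nc + 1) (hle : k' ≤ blockMT L Nc k) :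
    blockMT L Nc k' ≤ blockMT L Nc k := by
  unfold blockMT at hle ⊢
  split_ifs at hle ⊢ <;> omega

lemma forall_mem_blockPairs {P : ℕ × ℕ → Prop} :
    (∀ p ∈ blockPairs K L Nc, P p) ↔
      ∀ b < K / (L + 2), ∀ k ∈ Icc 1 (Nc + 1), P (blockPair L Nc (b, k)) := by
  simp only [blockPairs, forall_mem_image, Prod.forall, mem_product, mem_range, and_imp]
  exact ⟨fun h b hb k hk => h b k hb hk, fun h b k hb hk => h b hb k hk⟩

lemma blockPairs_mem_range (h : Nc ≤ L) :
    ∀ p ∈ blockPairs K L Nc, p.1 ∈ Icc 1 K ∧ p.2 ∈ Icc 1 K := by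
  rw [forall_mem_blockPairs]
  intro b hb k hk
  have hK : b * (L + 2) + (L + 2) ≤ K := (add_le_mul_of_lt hb).trans (Nat.div_mul_le_self K _)
  have hm := blockMT_mem_Icc h hk
  simp only [blockPair, mem_Icc] at hk hm ⊢
  omega

lemma blockPairs_connected (hNc : 0 < Nc) (h : Nc ≤ L) :
    ∀ p ∈ blockPairs K L Nc, Connected L p.1 p.2 := by
  rw [forall_mem_blockPairs]
  intro b _ k hk
  have hm := mem_Icc.1 (blockMT_mem_Icc h hk)
  have := blockMT_le_add (L := L) hNc k
  constructor <;> simp only [blockPair] <;> omega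

lemma injOn_snd_comp_blockPair (h : Nc ≤ L) :
    Set.InjOn (Prod.snd ∘ blockPair L Nc)
      ((range (K / (L + 2)) ×ˢ Icc 1 (Nc + 1) : Finset (ℕ × ℕ)) : Set (ℕ × ℕ)) := by
  rintro ⟨b, k⟩ hbk ⟨b', k'⟩ hbk' hkk'
  simp only [coe_product, coe_range, coe_Icc, Set.mem_prod, Set.mem_Icc] at hbk hbk'
  obtain ⟨rfl, rfl⟩ := block_eq (n := L + 2) (mem_Icc.2 (by omega)) (mem_Icc.2 (by omega)) hkk'
  rfl

lemma blockPairs_injOn_snd (h : Nc ≤ L) :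
    Set.InjOn Prod.snd (blockPairs K L Nc : Set (ℕ × ℕ)) := by
  rw [blockPairs, coe_image]
  exact (injOn_snd_comp_blockPair h).image_of_comp

lemma blockPairs_injOn_fst (h : Nc ≤ L) :
    Set.InjOn Prod.fst (blockPairs K L Nc : Set (ℕ × ℕ)) := by
  rw [blockPairs, coe_image]
  refine Set.InjOn.image_of_comp ?_
  rintro ⟨b, k⟩ hbk ⟨b', k'⟩ hbk' hmm'
  simp only [coe_product, coe_range, coe_Icc, Set.mem_prod, Set.mem_Icc] at hbk hbk'
  simp only [Function.comp, blockPair] at hmm'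
  have hm := mem_Icc.1 (blockMT_mem_Icc h (mem_Icc.2 hbk.2))
  have hm' := mem_Icc.1 (blockMT_mem_Icc h (mem_Icc.2 hbk'.2))
  obtain ⟨rfl, hm_eq⟩ :=
    block_eq (n := L + 2) (mem_Icc.2 (by omega)) (mem_Icc.2 (by omega)) hmm'
  rw [blockMT_injOn h (by simpa using hbk.2) (by simpa using hbk'.2) hm_eq]

lemma card_blockPairs (h : Nc ≤ L) : (blockPairs K L Nc).card = (Nc + 1) * (K / (L + 2)) := by
  rw [blockPairs, card_image_of_injOn (injOn_snd_comp_blockPair h).of_comp, card_product,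
    card_range, Nat.card_Icc, Nat.add_sub_cancel, Nat.mul_comm]

lemma blockPairs_fst_lt (h : Nc ≤ L) :
    ∀ p ∈ blockPairs K L Nc, ∀ q ∈ blockPairs K L Nc,
      p.1 ≠ q.1 → Connected L p.1 q.2 → q.1 < p.1 := by
  rw [forall_mem_blockPairs]
  intro b _ k hk
  rw [forall_mem_blockPairs]
  intro b' _ k' hk' hne hc
  simp only [blockPair] at hne hc ⊢
  have hm := mem_Icc.1 (blockMT_mem_Icc h hk)
  have hm' := mem_Icc.1 (blockMT_mem_Icc h hk')
  have hk1 := (mem_Icc.1 hk).1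
  have hk1' := (mem_Icc.1 hk').1
  have hk'_le : b' * (L + 2) + k' ≤ b * (L + 2) + blockMT L Nc k := hc.2
  rcases block_eq_or_succ_eq (mem_Icc.2 (by omega)) (mem_Icc.2 (by omega)) hc with rfl | rfl
  · have := blockMT_le_blockMT (mem_Icc.1 hk).2 (by omega : k' ≤ blockMT L Nc k)
    omega
  · have := add_one_mul b' (L + 2)
    omega

end blockPairs

section window

variable {L Nc : ℕ} {U : Finset ℕ}

lemma card_window_inter_le_of_le
    (hU : ∀ j ∈ U, ∃ b, ∃ t ∈ Icc 1 (Nc + 1), b * (L + 2) + t = j)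
    (h : Nc ≤ L) (b : ℕ) {k : ℕ} (hk : k ∈ Icc 1 Nc) :
    (Icc (b * (L + 2) + k - L) (b * (L + 2) + k) ∩ U).card ≤ Nc := by
  rw [mem_Icc] at hk
  have hsub : Icc (b * (L + 2) + k - L) (b * (L + 2) + k) ∩ U ⊆
      (Icc 1 k).image (b * (L + 2) + ·) ∪
        (Icc (k + 2) (Nc + 1)).image ((b - 1) * (L + 2) + ·) := by
    intro j hj
    obtain ⟨hwin, hjU⟩ := mem_inter.1 hj
    obtain ⟨b', t, ht, rfl⟩ := hU j hjU
    rw [mem_Icc] at ht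
    have hwin' := mem_Icc.1 hwin
    simp only [mem_union, mem_image, mem_Icc]
    rcases block_eq_or_succ_eq (mem_Icc.2 (by omega)) (mem_Icc.2 (by omega)) hwin' with rfl | rfl
    · exact .inl ⟨t, ⟨ht.1, by omega⟩, rfl⟩
    · rw [add_one_mul] at hwin'
      exact .inr ⟨t, ⟨by omega, ht.2⟩, by rw [Nat.add_sub_cancel]⟩
  calc _ ≤ _ := card_le_card hsub
    _ ≤ _ := card_union_le _ _
    _ ≤ (Icc 1 k).card + (Icc (k + 2) (Nc + 1)).card := add_le_add card_image_le card_image_le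
    _ ≤ Nc := by simp only [Nat.card_Icc]; omega

lemma card_window_inter_le_last
    (hU : ∀ j ∈ U, ∃ b, ∃ t ∈ Icc 1 (Nc + 1), b * (L + 2) + t = j)
    (h : Nc ≤ L) (b : ℕ) :
    (Icc (b * (L + 2) + (L + 2) - L) (b * (L + 2) + (L + 2)) ∩ U).card ≤ Nc := by
  have hsub : Icc (b * (L + 2) + (L + 2) - L) (b * (L + 2) + (L + 2)) ∩ U ⊆
      (Icc 2 (Nc + 1)).image (b * (L + 2) + ·) := by
    intro j hj
    obtain ⟨hwin, hjU⟩ := mem_inter.1 hj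
    obtain ⟨b', t, ht, rfl⟩ := hU j hjU
    rw [mem_Icc] at ht
    have hwin' := mem_Icc.1 hwin
    simp only [mem_image, mem_Icc]
    rcases block_eq_or_succ_eq (mem_Icc.2 (by omega)) (mem_Icc.2 (by omega)) hwin' with rfl | rfl
    · exact ⟨t, ⟨by omega, ht.2⟩, rfl⟩
    · rw [add_one_mul] at hwin'
      omega
  calc _ ≤ _ := card_le_card hsub
    _ ≤ (Icc 2 (Nc + 1)).card := card_image_le
    _ = Nc := by simp only [Nat.card_Icc]; omega

lemma card_window_inter_le
    (hU : ∀ j ∈ U, ∃ b, ∃ t ∈ Icc 1 (Nc + 1), b * (L + 2) + t = j)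
    (h : Nc ≤ L) (b : ℕ) {k : ℕ} (hk : k ∈ Icc 1 (Nc + 1)) :
    (Icc (b * (L + 2) + blockMT L Nc k - L) (b * (L + 2) + blockMT L Nc k) ∩ U).card ≤ Nc := by
  unfold blockMT
  split_ifs with hk_last
  · exact card_window_inter_le_last hU h b
  · exact card_window_inter_le_of_le hU h b (by rw [mem_Icc] at hk ⊢; omega)

end window

lemma blockPairs_card_window_le {K L Nc : ℕ} (h : Nc ≤ L) :
    ∀ p ∈ blockPairs K L Nc,
      (Icc (p.1 - L) p.1 ∩ (blockPairs K L Nc).image Prod.snd).card ≤ Nc := by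
  rw [forall_mem_blockPairs]
  intro b _ k hk
  refine card_window_inter_le (fun j hj => ?_) h b hk
  obtain ⟨p, hp, rfl⟩ := mem_image.1 hj
  obtain ⟨⟨b', t⟩, hbt, rfl⟩ := mem_image.1 hp
  exact ⟨b', t, (mem_product.1 hbt).2, rfl⟩

theorem uplink_mid_range_achievable_general (K L Nc : ℕ) (hNc : 0 < Nc) (h2 : Nc ≤ L) :
    ∃ C : ℕ → Finset ℕ, IsCellAssoc K Nc C ∧
      ∃ S : UplinkScheme K L C, (Nc + 1) * (K / (L + 2)) ≤ S.D.card := by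
  have hrange := blockPairs_mem_range (K := K) h2
  refine ⟨assocOf L (blockPairs K L Nc),
    isCellAssoc_assocOf (fun p hp => (hrange p hp).2) (blockPairs_card_window_le h2),
    UplinkScheme.ofDecreasingMT _ hrange (blockPairs_connected hNc h2) (blockPairs_injOn_fst h2)
      (blockPairs_injOn_snd h2) (blockPairs_fst_lt h2), ?_⟩
  exact (card_blockPairs h2).ge

/-- Achievability part of Theorem 1 for `L/2 ≤ Nc ≤ L`: there is a cell association
and an uplink zero-forcing scheme with at least `(Nc + 1)·⌊K/(L+2)⌋` decoding pairs. -/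
theorem uplink_mid_range_achievable (K L Nc : ℕ) (hK : 0 < K) (hL : 0 < L) (hNc : 0 < Nc)
    (h1 : L ≤ 2 * Nc) (h2 : Nc ≤ L) :
    ∃ C : ℕ → Finset ℕ, IsCellAssoc K Nc C ∧
      ∃ S : UplinkScheme K L C, (Nc + 1) * (K / (L + 2)) ≤ S.D.card :=
  uplink_mid_range_achievable_general K L Nc hNc h2
end

section
/- If 1 ≤ N_c and 2·N_c ≤ L − 2 (i.e., N_c ≤ L/2 − 1), then there exist a cell association C_1,…,C_K with |C_i| ≤ N_c for all i and a combinatorial uplink zero-forcing scheme for it with at least 2·N_c·⌊K/(2N_c + L)⌋ decoding pairs. (Achievability part of Theorem 1 for the range 1 ≤ N_c ≤ L/2 − 1: uplink per-user DoF 2N_c/(2N_c + L) is achievable via two interference-free groups of N_c users in each subnetwork of 2N_c + L consecutive users.) -/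
/-!
Cut the line into subnetworks of `2 * Nc + L` consecutive users. At positions `1, …, 2 * Nc + L`
of a subnetwork, MT `m` is decoded at its own BS `m` and MT `Nc + L + m` at BS `Nc + m`, for
`1 ≤ m ≤ Nc`; the MTs in between stay silent. MT `m` is heard by the active BSs `1, …, m` only,
and MT `Nc + L + m` by the active BSs `Nc + m, …, 2 * Nc` only, so no active MT reaches an active BS
outside its own group of `Nc`. Each MT is associated with the active BSs it reaches; decoding the
first group downwards and the second upwards, every MT is decoded before any BS it interferes with
has to decode.
-/

instance (L i j : ℕ) : Decidable (Connected L i j) := inferInstanceAs (Decidable (_ ∧ _))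

open Finset

section Scheme

variable {K L Nc : ℕ} {D : Finset (ℕ × ℕ)}

def zfAssoc (L : ℕ) (D : Finset (ℕ × ℕ)) (i : ℕ) : Finset ℕ :=
  if i ∈ D.image Prod.fst then (D.image Prod.snd).filter (Connected L i) else ∅

lemma mem_zfAssoc {p q : ℕ × ℕ} (hp : p ∈ D) (hq : q ∈ D) (h : Connected L p.1 q.2) :
    q.2 ∈ zfAssoc L D p.1 := by
  rw [zfAssoc, if_pos (mem_image_of_mem _ hp)]
  exact mem_filter.2 ⟨mem_image_of_mem _ hq, h⟩

lemma isCellAssoc_zfAssoc (hD : ∀ p ∈ D, p.2 ∈ Icc 1 K)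
    (hcard : ∀ p ∈ D, #((D.image Prod.snd).filter (Connected L p.1)) ≤ Nc) :
    IsCellAssoc K Nc (zfAssoc L D) := by
  intro i _
  unfold zfAssoc
  split_ifs with hi
  · obtain ⟨p, hp, rfl⟩ := mem_image.1 hi
    refine ⟨fun j hj => ?_, hcard p hp⟩
    obtain ⟨q, hq, rfl⟩ := mem_image.1 (mem_filter.1 hj).1
    exact hD q hq
  · simp

def UplinkScheme.ofKey {α : Type*} [LinearOrder α] (D : Finset (ℕ × ℕ)) (key : ℕ × ℕ → α)
    (hrange : ∀ p ∈ D, p.1 ∈ Icc 1 K ∧ p.2 ∈ Icc 1 K) (hconn : ∀ p ∈ D, Connected L p.1 p.2)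
    (hfst : Set.InjOn Prod.fst (D : Set (ℕ × ℕ))) (hsnd : Set.InjOn Prod.snd (D : Set (ℕ × ℕ)))
    (hkey : Set.InjOn key (D : Set (ℕ × ℕ)))
    (hzf : ∀ p ∈ D, ∀ q ∈ D, p.1 ≠ q.1 → Connected L p.1 q.2 → key p < key q) :
    UplinkScheme K L (zfAssoc L D) where
  D := D
  lt p q := key p < key q
  lt_irrefl _ _ := _root_.lt_irrefl _
  lt_trans _ _ _ _ _ _ := _root_.lt_trans
  lt_total _ hp _ hq hne := lt_or_gt_of_ne fun h => hne (hkey hp hq h)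
  mem_range := hrange
  assoc p hp := mem_zfAssoc hp hp (hconn p hp)
  conn := hconn
  distinct _ hp _ hq hne := ⟨fun h => hne (hfst hp hq h), fun h => hne (hsnd hp hq h)⟩
  zf p hp q hq hne h := ⟨mem_zfAssoc hp hq h, hzf p hp q hq hne h⟩

def decodingKey (p : ℕ × ℕ) : ℤ := if p.1 = p.2 then -p.2 else p.2

lemma decodingKey_injOn (hsnd : Set.InjOn Prod.snd (D : Set (ℕ × ℕ))) (hpos : ∀ p ∈ D, 1 ≤ p.2) :
    Set.InjOn decodingKey (D : Set (ℕ × ℕ)) := by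
  intro p hp q hq h
  have := hpos p hp
  have := hpos q hq
  refine hsnd hp hq ?_
  unfold decodingKey at h
  split_ifs at h <;> omega

end Scheme

section Subnet

variable (Nc L : ℕ)

/-- The slot `x = (b, u)`, `u < 2 * Nc`, is the `u`-th decoding pair of the `b`-th subnetwork. -/
def subnetBS (x : ℕ × ℕ) : ℕ := x.1 * (2 * Nc + L) + x.2 + 1

def subnetMT (x : ℕ × ℕ) : ℕ := subnetBS Nc L x + if x.2 < Nc then 0 else L

def subnetSlots (n : ℕ) : Finset (ℕ × ℕ) := range n ×ˢ range (2 * Nc)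

def subnetPairs (n : ℕ) : Finset (ℕ × ℕ) :=
  (subnetSlots Nc n).image fun x => (subnetMT Nc L x, subnetBS Nc L x)

variable {Nc L} {n : ℕ}

lemma mem_subnetSlots {x : ℕ × ℕ} : x ∈ subnetSlots Nc n ↔ x.1 < n ∧ x.2 < 2 * Nc := by
  simp [subnetSlots]

lemma connected_subnetMT_subnetBS_self (x : ℕ × ℕ) :
    Connected L (subnetMT Nc L x) (subnetBS Nc L x) := by
  unfold Connected subnetMT
  split_ifs <;> omega

lemma connected_subnetMT_subnetBS {x y : ℕ × ℕ} (hx : x.2 < 2 * Nc) (hy : y.2 < 2 * Nc)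
    (h : Connected L (subnetMT Nc L x) (subnetBS Nc L y)) :
    x.1 = y.1 ∧ (x.2 < Nc ∧ y.2 ≤ x.2 ∨ Nc ≤ x.2 ∧ x.2 ≤ y.2) := by
  obtain ⟨h₁, h₂⟩ := h
  unfold subnetMT subnetBS at h₁ h₂
  have hstep : ∀ {a b : ℕ}, a < b → a * (2 * Nc + L) + (2 * Nc + L) ≤ b * (2 * Nc + L) :=
    fun hab => by simpa [add_one_mul] using Nat.mul_le_mul_right (2 * Nc + L) hab
  rcases lt_trichotomy x.1 y.1 with hlt | heq | hgt
  · have := hstep hlt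
    split_ifs at h₁ h₂ <;> omega
  · rw [heq] at h₁ h₂ ⊢
    split_ifs at h₁ h₂ <;> omega
  · have := hstep hgt
    split_ifs at h₁ h₂ <;> omega

lemma eq_of_connected_subnet {x y : ℕ × ℕ} (hx : x.2 < 2 * Nc) (hy : y.2 < 2 * Nc)
    (hxy : Connected L (subnetMT Nc L x) (subnetBS Nc L y))
    (hyx : Connected L (subnetMT Nc L y) (subnetBS Nc L x)) : x = y := by
  obtain ⟨hblock, hxy⟩ := connected_subnetMT_subnetBS hx hy hxy
  obtain ⟨-, hyx⟩ := connected_subnetMT_subnetBS hy hx hyx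
  exact Prod.ext hblock (by omega)

lemma injOn_subnetBS : Set.InjOn (subnetBS Nc L) (subnetSlots Nc n : Set (ℕ × ℕ)) := by
  intro x hx y hy h
  have hx := (mem_subnetSlots.1 hx).2
  have hy := (mem_subnetSlots.1 hy).2
  exact eq_of_connected_subnet hx hy (h ▸ connected_subnetMT_subnetBS_self x)
    (h ▸ connected_subnetMT_subnetBS_self y)

lemma injOn_subnetMT : Set.InjOn (subnetMT Nc L) (subnetSlots Nc n : Set (ℕ × ℕ)) := by
  intro x hx y hy h
  have hx := (mem_subnetSlots.1 hx).2
  have hy := (mem_subnetSlots.1 hy).2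
  exact eq_of_connected_subnet hx hy (h ▸ connected_subnetMT_subnetBS_self y)
    (h ▸ connected_subnetMT_subnetBS_self x)

lemma injOn_fst_subnetPairs : Set.InjOn Prod.fst (subnetPairs Nc L n : Set (ℕ × ℕ)) := by
  rw [subnetPairs, coe_image]
  exact Set.InjOn.image_of_comp injOn_subnetMT

lemma injOn_snd_subnetPairs : Set.InjOn Prod.snd (subnetPairs Nc L n : Set (ℕ × ℕ)) := by
  rw [subnetPairs, coe_image]
  exact Set.InjOn.image_of_comp injOn_subnetBS

lemma card_subnetPairs : #(subnetPairs Nc L n) = 2 * Nc * n := by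
  rw [subnetPairs,
    card_image_of_injOn fun _ hx _ hy h => injOn_subnetBS hx hy (congrArg Prod.snd h), subnetSlots,
    card_product, card_range, card_range, mul_comm]

lemma connected_of_mem_subnetPairs {p : ℕ × ℕ} (hp : p ∈ subnetPairs Nc L n) :
    Connected L p.1 p.2 := by
  obtain ⟨x, -, rfl⟩ := mem_image.1 hp
  exact connected_subnetMT_subnetBS_self x

lemma subnetMT_le {x : ℕ × ℕ} (hx : x ∈ subnetSlots Nc n) :
    subnetMT Nc L x ≤ n * (2 * Nc + L) := by
  obtain ⟨hb, hu⟩ := mem_subnetSlots.1 hx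
  have := Nat.mul_le_mul_right (2 * Nc + L) hb
  rw [Nat.succ_mul] at this
  unfold subnetMT subnetBS
  split_ifs <;> omega

lemma mem_Icc_of_mem_subnetPairs {K : ℕ} (hK : n * (2 * Nc + L) ≤ K) {p : ℕ × ℕ}
    (hp : p ∈ subnetPairs Nc L n) : p.1 ∈ Icc 1 K ∧ p.2 ∈ Icc 1 K := by
  obtain ⟨x, hx, rfl⟩ := mem_image.1 hp
  have hle : subnetBS Nc L x ≤ subnetMT Nc L x := (connected_subnetMT_subnetBS_self x).2
  have hmt : subnetMT Nc L x ≤ n * (2 * Nc + L) := subnetMT_le hx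
  simp only [mem_Icc]
  unfold subnetBS at hle ⊢
  omega

lemma card_filter_connected_le {p : ℕ × ℕ} (hp : p ∈ subnetPairs Nc L n) :
    #(((subnetPairs Nc L n).image Prod.snd).filter (Connected L p.1)) ≤ Nc := by
  obtain ⟨x, hx, rfl⟩ := mem_image.1 hp
  set group := if x.2 < Nc then range Nc else Ico Nc (2 * Nc)
  have hsub : ((subnetPairs Nc L n).image Prod.snd).filter (Connected L (subnetMT Nc L x)) ⊆
      ({x.1} ×ˢ group).image (subnetBS Nc L) := by
    intro j hj
    obtain ⟨hj, hc⟩ := mem_filter.1 hj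
    rw [subnetPairs, image_image] at hj
    obtain ⟨y, hy, rfl⟩ := mem_image.1 hj
    have hy := (mem_subnetSlots.1 hy).2
    obtain ⟨hblock, hslot⟩ := connected_subnetMT_subnetBS (mem_subnetSlots.1 hx).2 hy hc
    refine mem_image_of_mem _ (mem_product.2 ⟨mem_singleton.2 hblock.symm, ?_⟩)
    simp only [group]
    split_ifs <;> simp only [mem_range, mem_Ico] <;> omega
  calc _ ≤ _ := card_le_card hsub
    _ ≤ #({x.1} ×ˢ group) := card_image_le
    _ = Nc := by
      simp only [group, card_product, card_singleton]
      split_ifs <;> simp only [card_range, Nat.card_Ico] <;> omega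

lemma decodingKey_subnet (hL : 0 < L) (x : ℕ × ℕ) :
    decodingKey (subnetMT Nc L x, subnetBS Nc L x) =
      if x.2 < Nc then -(subnetBS Nc L x : ℤ) else subnetBS Nc L x := by
  unfold decodingKey subnetMT
  split_ifs <;> omega

lemma decodingKey_lt_of_connected (hL : 0 < L) {p q : ℕ × ℕ} (hp : p ∈ subnetPairs Nc L n)
    (hq : q ∈ subnetPairs Nc L n) (hne : p.1 ≠ q.1) (h : Connected L p.1 q.2) :
    decodingKey p < decodingKey q := by
  obtain ⟨x, hx, rfl⟩ := mem_image.1 hp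
  obtain ⟨y, hy, rfl⟩ := mem_image.1 hq
  obtain ⟨hblock, hslot⟩ :=
    connected_subnetMT_subnetBS (mem_subnetSlots.1 hx).2 (mem_subnetSlots.1 hy).2 h
  have hslot_ne : x.2 ≠ y.2 := fun h' => hne (by rw [Prod.ext hblock h'])
  rw [decodingKey_subnet hL, decodingKey_subnet hL]
  unfold subnetBS
  rw [hblock]
  rcases hslot with ⟨hx₁, hx₂⟩ | ⟨hx₁, hx₂⟩ <;> split_ifs <;> omega

end Subnet

theorem uplink_low_range_achievable_general (K L Nc : ℕ) (hL : 0 < L) :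
    ∃ C : ℕ → Finset ℕ, IsCellAssoc K Nc C ∧
      ∃ S : UplinkScheme K L C, 2 * Nc * (K / (2 * Nc + L)) ≤ S.D.card := by
  set n := K / (2 * Nc + L)
  have hrange : ∀ p ∈ subnetPairs Nc L n, p.1 ∈ Icc 1 K ∧ p.2 ∈ Icc 1 K :=
    fun _ => mem_Icc_of_mem_subnetPairs (Nat.div_mul_le_self K _)
  have hkey : Set.InjOn decodingKey (subnetPairs Nc L n : Set (ℕ × ℕ)) :=
    decodingKey_injOn injOn_snd_subnetPairs fun p hp => (mem_Icc.1 (hrange p hp).2).1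
  refine ⟨zfAssoc L (subnetPairs Nc L n),
    isCellAssoc_zfAssoc (fun p hp => (hrange p hp).2) fun _ => card_filter_connected_le,
    UplinkScheme.ofKey _ decodingKey hrange (fun _ => connected_of_mem_subnetPairs)
      injOn_fst_subnetPairs injOn_snd_subnetPairs hkey
      (fun _ hp _ hq => decodingKey_lt_of_connected hL hp hq),
    card_subnetPairs.ge⟩

/-- Achievability part of Theorem 1 for `1 ≤ Nc ≤ L/2 - 1`: there is a cell association
and an uplink zero-forcing scheme with at least `2·Nc·⌊K/(2Nc+L)⌋` decoding pairs. -/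
theorem uplink_low_range_achievable (K L Nc : ℕ) (hK : 0 < K) (hL : 0 < L)
    (h1 : 1 ≤ Nc) (h2 : 2 * Nc ≤ L - 2) :
    ∃ C : ℕ → Finset ℕ, IsCellAssoc K Nc C ∧
      ∃ S : UplinkScheme K L C, 2 * Nc * (K / (2 * Nc + L)) ≤ S.D.card :=
  uplink_low_range_achievable_general K L Nc hL
end

section
/- Let N_c ≥ L + 1 and κ = ⌈(L+1)/2⌉ + N_c − (L+1). Then there exist a full coverage cell association C_1,…,C_K (i.e., {max(1, i−L),…,i} ⊆ C_i for all i) with |C_i| ≤ N_c for all i, and a combinatorial downlink zero-forcing scheme for it with at least 2κ·⌊K/(2κ+L)⌋ active receivers. (Achievability of downlink per-user DoF 2κ/(2κ+L) under full coverage associations, as in Theorems 2 and 3.) -/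
/-- A full coverage cell association: each MT is associated with all BSs connected to it. -/
def FullCoverage (K L : ℕ) (C : ℕ → Finset ℕ) : Prop :=
  ∀ i ∈ Finset.Icc 1 K, Finset.Icc (max 1 (i - L)) i ⊆ C i

/-- A combinatorial downlink zero-forcing scheme for the association `C`:
a set `A ⊆ {1,…,K}` of active receivers and, for each `i ∈ A`, a nonempty set
`T i ⊆ C i` of base stations actively transmitting `W i`, at least one of which is
connected to receiver `i`, such that there is a matching between `T i` and the set of
active receivers connected to at least one BS in `T i`, saturating those receivers. -/
structure DownlinkScheme (K L : ℕ) (C : ℕ → Finset ℕ) where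
  A : Finset ℕ
  T : ℕ → Finset ℕ
  A_sub : A ⊆ Finset.Icc 1 K
  T_sub : ∀ i ∈ A, T i ⊆ C i
  T_nonempty : ∀ i ∈ A, (T i).Nonempty
  T_conn : ∀ i ∈ A, ∃ j ∈ T i, Connected L i j
  matching : ∀ i ∈ A, ∃ f : ℕ → ℕ,
      (∀ r ∈ A, (∃ j ∈ T i, Connected L r j) → f r ∈ T i ∧ Connected L r (f r)) ∧
      (∀ r ∈ A, ∀ s ∈ A, (∃ j ∈ T i, Connected L r j) → (∃ j ∈ T i, Connected L s j) →
        f r = f s → r = s)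

/-!
Group the active receivers into runs of `κ` consecutive receivers, a run being served by the `κ`
base stations `s` positions to its left (receiver `r` matched to base station `r - s`). These base
stations reach the receivers in a window of length `κ + L`, so if the runs are separated by idle
gaps the transmit set of a run sees only that run, and the matching saturates it. Alternating the
shifts `⌈L/2⌉` and `⌊L/2⌋` lets the gaps have lengths `⌊L/2⌋` and `⌈L/2⌉`, giving `2κ` active
receivers in every block of `2κ + L`. A receiver's cell, its full-coverage window together with
its transmit set, is then an interval of length at most `κ + ⌈L/2⌉ = N_c`.
-/

namespace DownlinkZF

open Finset

lemma mem_Ico_of_connected {L a κ r j : ℕ} (hj : j ∈ Ico a (a + κ)) (h : Connected L r j) :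
    r ∈ Ico a (a + κ + L) := by
  simp only [mem_Ico] at hj ⊢
  obtain ⟨h₁, h₂⟩ := h
  omega

lemma sub_mem_Ico_and_connected {L a s κ r : ℕ} (hs : s ≤ L) (hr : r ∈ Ico (a + s) (a + s + κ)) :
    r - s ∈ Ico a (a + κ) ∧ Connected L r (r - s) := by
  simp only [mem_Ico, Connected] at hr ⊢
  omega

lemma card_Icc_max_one_sub_le (L i : ℕ) : (Icc (max 1 (i - L)) i).card ≤ L + 1 := by
  rw [Nat.card_Icc]
  omega

lemma card_Icc_max_one_sub_union_Ico_le {L a s κ i : ℕ} (hs : s ≤ L)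
    (hi : i ∈ Ico (a + s) (a + s + κ)) :
    (Icc (max 1 (i - L)) i ∪ Ico a (a + κ)).card ≤ max (L + 1) (κ + max s (L - s)) := by
  rw [mem_Ico] at hi
  have hull : Icc (max 1 (i - L)) i ∪ Ico a (a + κ) ⊆ Ico (min (i - L) a) (max (i + 1) (a + κ)) := by
    intro x hx
    simp only [mem_union, mem_Icc, mem_Ico] at hx ⊢
    omega
  refine (card_le_card hull).trans ?_
  rw [Nat.card_Ico]
  omega

section Groups

variable {ι : Type*} (κ : ℕ) (a s : ι → ℕ)

def groupTx (g : ι) : Finset ℕ := Ico (a g) (a g + κ)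

def groupRx (g : ι) : Finset ℕ := Ico (a g + s g) (a g + s g + κ)

/-- `Ico (a g) (a g + κ + L)` is the set of receivers connected to some transmitter of `g`, so the
transmitters of a group reach no receiver of another group. -/
structure IsolatedGroups (K L : ℕ) (G : Finset ι) : Prop where
  shift_le : ∀ g ∈ G, s g ≤ L
  one_le : ∀ g ∈ G, 1 ≤ a g
  le_add_one : ∀ g ∈ G, a g + s g + κ ≤ K + 1
  isolated : ∀ g ∈ G, ∀ g' ∈ G, ∀ r ∈ groupRx κ a s g', r ∈ Ico (a g) (a g + κ + L) → g' = g

open Classical in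
noncomputable def txOf (G : Finset ι) (i : ℕ) : Finset ℕ :=
  if h : ∃ g ∈ G, i ∈ groupRx κ a s g then groupTx κ a h.choose else ∅

def groupCell (L : ℕ) (T : ℕ → Finset ℕ) (i : ℕ) : Finset ℕ := Icc (max 1 (i - L)) i ∪ T i

variable {κ a s} {K L : ℕ} {G : Finset ι}

namespace IsolatedGroups

variable (hG : IsolatedGroups κ a s K L G)
include hG

lemma eq_of_connected {g g' : ι} (hg : g ∈ G) (hg' : g' ∈ G) {r j : ℕ}
    (hr : r ∈ groupRx κ a s g') (hj : j ∈ groupTx κ a g) (hc : Connected L r j) : g' = g :=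
  hG.isolated g hg g' hg' r hr (mem_Ico_of_connected hj hc)

lemma connected_sub_shift {g : ι} (hg : g ∈ G) {r : ℕ} (hr : r ∈ groupRx κ a s g) :
    r - s g ∈ groupTx κ a g ∧ Connected L r (r - s g) :=
  sub_mem_Ico_and_connected (hG.shift_le g hg) hr

lemma eq_of_mem_groupRx {g g' : ι} (hg : g ∈ G) (hg' : g' ∈ G) {r : ℕ}
    (hr : r ∈ groupRx κ a s g) (hr' : r ∈ groupRx κ a s g') : g' = g :=
  hG.eq_of_connected hg hg' hr' (hG.connected_sub_shift hg hr).1 (hG.connected_sub_shift hg hr).2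

lemma txOf_eq {g : ι} (hg : g ∈ G) {i : ℕ} (hi : i ∈ groupRx κ a s g) :
    txOf κ a s G i = groupTx κ a g := by
  have h : ∃ g ∈ G, i ∈ groupRx κ a s g := ⟨g, hg, hi⟩
  obtain ⟨hg', hi'⟩ := h.choose_spec
  rw [txOf, dif_pos h, hG.eq_of_mem_groupRx hg hg' hi hi']

lemma isCellAssoc_groupCell {Nc : ℕ} (hNc : L + 1 ≤ Nc)
    (hNcG : ∀ g ∈ G, κ + max (s g) (L - s g) ≤ Nc) :
    IsCellAssoc K Nc (groupCell L (txOf κ a s G)) := by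
  intro i hi
  rw [mem_Icc] at hi
  have hcov : Icc (max 1 (i - L)) i ⊆ Icc 1 K := Icc_subset_Icc (le_max_left _ _) hi.2
  by_cases h : ∃ g ∈ G, i ∈ groupRx κ a s g
  · obtain ⟨g, hg, hig⟩ := h
    have htx : groupTx κ a g ⊆ Icc 1 K := by
      have := hG.one_le g hg
      have := hG.le_add_one g hg
      intro x hx
      simp only [groupTx, mem_Ico, mem_Icc] at hx ⊢
      omega
    rw [groupCell, hG.txOf_eq hg hig]
    exact ⟨union_subset hcov htx, (card_Icc_max_one_sub_union_Ico_le (hG.shift_le g hg) hig).trans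
      (max_le hNc (hNcG g hg))⟩
  · rw [groupCell, txOf, dif_neg h, union_empty]
    exact ⟨hcov, (card_Icc_max_one_sub_le L i).trans hNc⟩

lemma mem_groupRx_of_connected {g : ι} (hg : g ∈ G) {r j : ℕ} (hr : r ∈ G.biUnion (groupRx κ a s))
    (hj : j ∈ groupTx κ a g) (hc : Connected L r j) : r ∈ groupRx κ a s g := by
  obtain ⟨g', hg', hr'⟩ := mem_biUnion.mp hr
  rwa [← hG.eq_of_connected hg hg' hr' hj hc]

noncomputable def scheme : DownlinkScheme K L (groupCell L (txOf κ a s G)) where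
  A := G.biUnion (groupRx κ a s)
  T := txOf κ a s G
  A_sub i hi := by
    obtain ⟨g, hg, hig⟩ := mem_biUnion.mp hi
    have := hG.one_le g hg
    have := hG.le_add_one g hg
    simp only [groupRx, mem_Ico, mem_Icc] at hig ⊢
    omega
  T_sub _ _ := subset_union_right
  T_nonempty i hi := by
    obtain ⟨g, hg, hig⟩ := mem_biUnion.mp hi
    exact hG.txOf_eq hg hig ▸ ⟨_, (hG.connected_sub_shift hg hig).1⟩
  T_conn i hi := by
    obtain ⟨g, hg, hig⟩ := mem_biUnion.mp hi
    exact hG.txOf_eq hg hig ▸ ⟨_, hG.connected_sub_shift hg hig⟩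
  matching i hi := by
    obtain ⟨g, hg, hig⟩ := mem_biUnion.mp hi
    rw [hG.txOf_eq hg hig]
    have hrx {r : ℕ} (hr : r ∈ G.biUnion (groupRx κ a s))
        (hc : ∃ j ∈ groupTx κ a g, Connected L r j) : r ∈ groupRx κ a s g := by
      obtain ⟨j, hj, hc⟩ := hc
      exact hG.mem_groupRx_of_connected hg hr hj hc
    refine ⟨fun r => r - s g, fun r hr hc => hG.connected_sub_shift hg (hrx hr hc),
      fun r hr r' hr' hc hc' heq => ?_⟩
    have h := hrx hr hc
    have h' := hrx hr' hc'
    simp only [groupRx, mem_Ico] at h h' heq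
    omega

lemma card_scheme_A : hG.scheme.A.card = G.card * κ := by
  change (G.biUnion (groupRx κ a s)).card = G.card * κ
  rw [card_biUnion fun g hg g' hg' hne =>
    disjoint_left.mpr fun r hr hr' => hne (hG.eq_of_mem_groupRx hg' hg hr' hr)]
  simp [groupRx]

end IsolatedGroups

lemma fullCoverage_groupCell (K L : ℕ) (T : ℕ → Finset ℕ) : FullCoverage K L (groupCell L T) :=
  fun _ _ => subset_union_left

end Groups

/-- Block `b` occupies `b P + 1, …, b P + P` with `P = 2κ + L`: `l` idle receivers, `κ` receivers
served by the base stations `l` to their left, `L - l` idle receivers, `κ` receivers served by the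
base stations `L - l` to their left. -/
def blockTx (L l κ : ℕ) (g : ℕ × Bool) : ℕ :=
  g.1 * (2 * κ + L) + bif g.2 then l + κ + 1 else 1

def blockShift (L l : ℕ) (g : ℕ × Bool) : ℕ := bif g.2 then L - l else l

lemma add_le_mul_of_lt {b b' : ℕ} (P : ℕ) (h : b < b') : b * P + P ≤ b' * P := by
  simpa [add_one_mul] using Nat.mul_le_mul_right P h

lemma isolatedGroups_block {K L l κ B : ℕ} (hl : l ≤ L) (hB : B * (2 * κ + L) ≤ K) :
    IsolatedGroups κ (blockTx L l κ) (blockShift L l) K L (range B ×ˢ univ) where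
  shift_le := by
    rintro ⟨b, _ | _⟩ - <;> simp only [blockShift, cond] <;> omega
  one_le := by
    rintro ⟨b, _ | _⟩ - <;> simp only [blockTx, cond] <;> omega
  le_add_one := by
    rintro ⟨b, x⟩ hb
    simp only [mem_product, mem_range, mem_univ, and_true] at hb
    have := (add_le_mul_of_lt (2 * κ + L) hb).trans hB
    cases x <;> simp only [blockTx, blockShift, cond] <;> omega
  isolated := by
    rintro ⟨b, x⟩ - ⟨b', y⟩ - r hr hreach
    simp only [groupRx, blockTx, blockShift, mem_Ico] at hr hreach
    rcases lt_trichotomy b b' with h | rfl | h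
    · have := add_le_mul_of_lt (2 * κ + L) h
      cases x <;> cases y <;> simp only [cond] at hr hreach <;> omega
    · cases x <;> cases y <;> simp only [cond] at hr hreach <;> first | rfl | omega
    · have := add_le_mul_of_lt (2 * κ + L) h
      cases x <;> cases y <;> simp only [cond] at hr hreach <;> omega

end DownlinkZF

open Finset DownlinkZF in
theorem downlink_full_coverage_achievable_general (K L Nc : ℕ)
    (hNc : L + 1 ≤ Nc) (kappa : ℕ) (hkappa : kappa = (L + 2) / 2 + Nc - (L + 1)) :
    ∃ C : ℕ → Finset ℕ, IsCellAssoc K Nc C ∧ FullCoverage K L C ∧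
      ∃ S : DownlinkScheme K L C, 2 * kappa * (K / (2 * kappa + L)) ≤ S.A.card := by
  have hG := isolatedGroups_block (l := L - L / 2) (κ := kappa) (Nat.sub_le L (L / 2))
    (Nat.div_mul_le_self K (2 * kappa + L))
  have hNcG : ∀ g ∈ range (K / (2 * kappa + L)) ×ˢ univ,
      kappa + max (blockShift L (L - L / 2) g) (L - blockShift L (L - L / 2) g) ≤ Nc := by
    rintro ⟨b, _ | _⟩ - <;> simp only [blockShift, cond] <;> omega
  refine ⟨_, hG.isCellAssoc_groupCell hNc hNcG, fullCoverage_groupCell K L _, hG.scheme, ?_⟩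
  rw [hG.card_scheme_A, card_product, card_range, card_univ, Fintype.card_bool]
  exact le_of_eq (by ring)

/-- Achievability of downlink per-user DoF `2κ/(2κ+L)` under full coverage associations
(`Nc ≥ L + 1`, `κ = ⌈(L+1)/2⌉ + Nc - (L+1)`). -/
theorem downlink_full_coverage_achievable (K L Nc : ℕ) (hK : 0 < K) (hL : 0 < L)
    (hNc : L + 1 ≤ Nc) (kappa : ℕ) (hkappa : kappa = (L + 2) / 2 + Nc - (L + 1)) :
    ∃ C : ℕ → Finset ℕ, IsCellAssoc K Nc C ∧ FullCoverage K L C ∧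
      ∃ S : DownlinkScheme K L C, 2 * kappa * (K / (2 * kappa + L)) ≤ S.A.card :=
  downlink_full_coverage_achievable_general K L Nc hNc kappa hkappa
end

section
/- If 1 ≤ N_c ≤ L, then there exists a single cell association C_1,…,C_K with |C_i| ≤ N_c for all i that simultaneously admits a combinatorial uplink zero-forcing scheme with at least 2·N_c·⌊K/(2N_c + L)⌋ decoding pairs and a combinatorial downlink zero-forcing scheme with at least 2·N_c·⌊K/(2N_c + L)⌋ active receivers. (Inner bound of Theorem 2 for 1 ≤ N_c ≤ L: the average uplink-downlink zero-forcing per-user DoF is at least 2N_c/(2N_c + L) with a shared association.) -/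
/-! Cut the users into `⌊K/(2Nc+L)⌋` blocks `s+1, …, s+2Nc+L` and activate in each block the
`Nc` head users `s+1, …, s+Nc` and the `Nc` tail users `s+Nc+L+1, …, s+2Nc+L`. A head user `i`
is decoded at its own BS `i`, a tail user at BS `i - L`, so the decoding base stations of a block
are `s+1, …, s+2Nc`; as a user hears only its own BS and the `L` below it, no user hears a
decoding BS of another block or of the other half of its own block. A head user `i` therefore
interferes only at the decoding BSs of the lower head users, all in its association
`{s+1, …, s+Nc}`, and a tail user only at those of the higher tail users, all in its association
`{s+Nc+1, …, s+2Nc}`: decoding heads in decreasing and tails in increasing order is zero-forcing.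
In the downlink, head user `i` transmits from `i, …, s+Nc` and tail user `i` from
`s+Nc+1, …, i-L`; the active receivers hearing these are head users above `i`, resp. tail users
below `i`, and each is matched to its own uplink decoding BS. -/

open Finset

section Blocks

def blockStart (B i : ℕ) : ℕ := (i - 1) / B * B

lemma blockStart_mul_add_add_one {B t : ℕ} (b : ℕ) (ht : t < B) :
    blockStart B (b * B + t + 1) = b * B := by
  have hB : 0 < B := Nat.zero_lt_of_lt ht
  rw [blockStart, Nat.add_sub_cancel, mul_comm b, Nat.mul_add_div hB, Nat.div_eq_of_lt ht,
    add_zero, mul_comm]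

lemma blockStart_eq_or_separated (B i j : ℕ) :
    blockStart B i = blockStart B j ∨ blockStart B i + B ≤ blockStart B j ∨
      blockStart B j + B ≤ blockStart B i := by
  unfold blockStart
  rcases lt_trichotomy ((i - 1) / B) ((j - 1) / B) with h | h | h
  · exact Or.inr (Or.inl (by simpa [add_one_mul] using Nat.mul_le_mul_right B h))
  · exact Or.inl (by rw [h])
  · exact Or.inr (Or.inr (by simpa [add_one_mul] using Nat.mul_le_mul_right B h))

def blockUsers (B n : ℕ) (P : Finset ℕ) : Finset ℕ :=
  (range n ×ˢ P).image fun p => p.1 * B + p.2 + 1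

variable {B n : ℕ} {P : Finset ℕ}

lemma exists_of_mem_blockUsers (hP : ∀ t ∈ P, t < B) {i : ℕ} (hi : i ∈ blockUsers B n P) :
    ∃ t ∈ P, i = blockStart B i + t + 1 ∧ blockStart B i + B ≤ n * B := by
  simp only [blockUsers, mem_image, mem_product, mem_range] at hi
  obtain ⟨⟨b, t⟩, ⟨hb, ht⟩, rfl⟩ := hi
  rw [blockStart_mul_add_add_one b (hP t ht)]
  exact ⟨t, ht, rfl, by simpa [add_one_mul] using Nat.mul_le_mul_right B hb⟩

lemma card_blockUsers (hP : ∀ t ∈ P, t < B) : (blockUsers B n P).card = n * P.card := by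
  rw [blockUsers, card_image_of_injOn, card_product, card_range]
  rintro ⟨b, t⟩ hbt ⟨b', t'⟩ hbt' h
  simp only [coe_product, Set.mem_prod, mem_coe, mem_range] at hbt hbt' h
  have hstart : b * B = b' * B := by
    rw [← blockStart_mul_add_add_one b (hP t hbt.2),
      ← blockStart_mul_add_add_one b' (hP t' hbt'.2), h]
  have hB : 0 < B := Nat.zero_lt_of_lt (hP t hbt.2)
  rw [Nat.eq_of_mul_eq_mul_right hB hstart, show t = t' by omega]

end Blocks

namespace BlockScheme

variable (Nc L n : ℕ)

def activeSlots : Finset ℕ :=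
  range Nc ∪ Ico (Nc + L) (2 * Nc + L)

def activeUsers : Finset ℕ :=
  blockUsers (2 * Nc + L) n (activeSlots Nc L)

variable {Nc L} in
lemma mem_activeSlots {t : ℕ} :
    t ∈ activeSlots Nc L ↔ t < Nc ∨ Nc + L ≤ t ∧ t < 2 * Nc + L := by
  simp only [activeSlots, mem_union, mem_range, mem_Ico]

lemma lt_of_mem_activeSlots : ∀ t ∈ activeSlots Nc L, t < 2 * Nc + L := by
  intro t ht
  rw [mem_activeSlots] at ht
  omega

lemma card_activeSlots : (activeSlots Nc L).card = 2 * Nc := by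
  have hdisj : Disjoint (range Nc) (Ico (Nc + L) (2 * Nc + L)) :=
    disjoint_left.2 fun t h1 h2 => by simp only [mem_range, mem_Ico] at h1 h2; omega
  rw [activeSlots, card_union_of_disjoint hdisj, card_range, Nat.card_Ico]
  omega

lemma card_activeUsers : (activeUsers Nc L n).card = 2 * Nc * n := by
  rw [activeUsers, card_blockUsers (lt_of_mem_activeSlots Nc L), card_activeSlots, mul_comm]

def cellAssoc (i : ℕ) : Finset ℕ :=
  if i ∈ activeUsers Nc L n then
    if i ≤ blockStart (2 * Nc + L) i + Nc then
      Icc (blockStart (2 * Nc + L) i + 1) (blockStart (2 * Nc + L) i + Nc)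
    else Icc (blockStart (2 * Nc + L) i + Nc + 1) (blockStart (2 * Nc + L) i + 2 * Nc)
  else ∅

def transmitters (i : ℕ) : Finset ℕ :=
  if i ≤ blockStart (2 * Nc + L) i + Nc then Icc i (blockStart (2 * Nc + L) i + Nc)
  else Icc (blockStart (2 * Nc + L) i + Nc + 1) (i - L)

def decodingBS (i : ℕ) : ℕ :=
  if i ≤ blockStart (2 * Nc + L) i + Nc then i else i - L

def decodingRank (i : ℕ) : ℤ :=
  if i ≤ blockStart (2 * Nc + L) i + Nc then -i else i

variable {Nc L n}

lemma exists_of_mem_activeUsers {i : ℕ} (hi : i ∈ activeUsers Nc L n) :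
    ∃ t, (t < Nc ∨ Nc + L ≤ t ∧ t < 2 * Nc + L) ∧
      i = blockStart (2 * Nc + L) i + t + 1 ∧
      blockStart (2 * Nc + L) i + (2 * Nc + L) ≤ n * (2 * Nc + L) := by
  obtain ⟨t, ht, hi⟩ := exists_of_mem_blockUsers (lt_of_mem_activeSlots Nc L) hi
  exact ⟨t, mem_activeSlots.1 ht, hi⟩

lemma activeUsers_subset_Icc {K : ℕ} (hn : n * (2 * Nc + L) ≤ K) :
    activeUsers Nc L n ⊆ Icc 1 K := by
  intro i hi
  obtain ⟨t, ht, hi, hs⟩ := exists_of_mem_activeUsers hi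
  rw [mem_Icc]
  omega

lemma cellAssoc_subset_Icc {K : ℕ} (hn : n * (2 * Nc + L) ≤ K) (i : ℕ) :
    cellAssoc Nc L n i ⊆ Icc 1 K := by
  by_cases hi : i ∈ activeUsers Nc L n
  · obtain ⟨t, ht, hi', hs⟩ := exists_of_mem_activeUsers hi
    intro j hj
    simp only [cellAssoc, if_pos hi] at hj
    split_ifs at hj <;> simp only [mem_Icc] at hj ⊢ <;> omega
  · simp [cellAssoc, hi]

lemma card_cellAssoc_le (i : ℕ) : (cellAssoc Nc L n i).card ≤ Nc := by
  unfold cellAssoc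
  split_ifs <;> simp only [Nat.card_Icc, card_empty] <;> omega

lemma transmitters_subset_cellAssoc {i : ℕ} (hi : i ∈ activeUsers Nc L n) :
    transmitters Nc L i ⊆ cellAssoc Nc L n i := by
  obtain ⟨t, ht, hi', -⟩ := exists_of_mem_activeUsers hi
  intro j hj
  simp only [transmitters, cellAssoc, if_pos hi] at hj ⊢
  split_ifs at hj ⊢ <;> simp only [mem_Icc] at hj ⊢ <;> omega

lemma decodingBS_mem_transmitters_self {i : ℕ} (hi : i ∈ activeUsers Nc L n) :
    decodingBS Nc L i ∈ transmitters Nc L i := by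
  obtain ⟨t, ht, hi', -⟩ := exists_of_mem_activeUsers hi
  simp only [transmitters, decodingBS]
  split_ifs <;> simp only [mem_Icc] <;> omega

lemma connected_decodingBS {i : ℕ} (hi : i ∈ activeUsers Nc L n) :
    Connected L i (decodingBS Nc L i) := by
  obtain ⟨t, ht, hi', -⟩ := exists_of_mem_activeUsers hi
  simp only [Connected, decodingBS]
  split_ifs <;> omega

lemma decodingBS_mem_cellAssoc {i : ℕ} (hi : i ∈ activeUsers Nc L n) :
    decodingBS Nc L i ∈ cellAssoc Nc L n i :=
  transmitters_subset_cellAssoc hi (decodingBS_mem_transmitters_self hi)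

lemma decodingBS_injOn : Set.InjOn (decodingBS Nc L) (activeUsers Nc L n) := by
  intro i hi i' hi' h
  obtain ⟨t, ht, hi, -⟩ := exists_of_mem_activeUsers hi
  obtain ⟨t', ht', hi', -⟩ := exists_of_mem_activeUsers hi'
  simp only [decodingBS] at h
  rcases blockStart_eq_or_separated (2 * Nc + L) i i' with hs | hs | hs <;>
    split_ifs at h <;> omega

lemma decodingBS_mem_transmitters {i r j : ℕ} (hi : i ∈ activeUsers Nc L n)
    (hr : r ∈ activeUsers Nc L n) (hj : j ∈ transmitters Nc L i) (hc : Connected L r j) :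
    decodingBS Nc L r ∈ transmitters Nc L i := by
  obtain ⟨t, ht, hi, -⟩ := exists_of_mem_activeUsers hi
  obtain ⟨t', ht', hr, -⟩ := exists_of_mem_activeUsers hr
  simp only [Connected, transmitters, decodingBS] at hj hc ⊢
  rcases blockStart_eq_or_separated (2 * Nc + L) i r with hs | hs | hs <;>
    split_ifs at hj ⊢ <;> simp only [mem_Icc] at hj ⊢ <;> omega

lemma decodingBS_mem_cellAssoc_of_connected {i i' : ℕ} (hi : i ∈ activeUsers Nc L n)
    (hi' : i' ∈ activeUsers Nc L n) (hc : Connected L i (decodingBS Nc L i')) :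
    decodingBS Nc L i' ∈ cellAssoc Nc L n i := by
  obtain ⟨t, ht, hi'', -⟩ := exists_of_mem_activeUsers hi
  obtain ⟨t', ht', hi', -⟩ := exists_of_mem_activeUsers hi'
  simp only [Connected, cellAssoc, decodingBS, if_pos hi] at hc ⊢
  rcases blockStart_eq_or_separated (2 * Nc + L) i i' with hs | hs | hs <;>
    split_ifs at hc ⊢ <;> simp only [mem_Icc] <;> omega

lemma decodingRank_lt_of_connected {i i' : ℕ} (hi : i ∈ activeUsers Nc L n)
    (hi' : i' ∈ activeUsers Nc L n) (hne : i ≠ i') (hc : Connected L i (decodingBS Nc L i')) :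
    decodingRank Nc L i < decodingRank Nc L i' := by
  obtain ⟨t, ht, hi, -⟩ := exists_of_mem_activeUsers hi
  obtain ⟨t', ht', hi', -⟩ := exists_of_mem_activeUsers hi'
  simp only [Connected, decodingRank, decodingBS] at hc ⊢
  rcases blockStart_eq_or_separated (2 * Nc + L) i i' with hs | hs | hs <;>
    split_ifs at hc ⊢ <;> omega

lemma decodingRank_injOn : Set.InjOn (decodingRank Nc L) (activeUsers Nc L n) := by
  intro i hi i' hi' h
  obtain ⟨t, ht, hi, -⟩ := exists_of_mem_activeUsers hi
  obtain ⟨t', ht', hi', -⟩ := exists_of_mem_activeUsers hi'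
  simp only [decodingRank] at h
  split_ifs at h <;> omega

variable (Nc L n)

def decodingPairs : Finset (ℕ × ℕ) :=
  (activeUsers Nc L n).image fun i => (i, decodingBS Nc L i)

lemma card_decodingPairs : (decodingPairs Nc L n).card = 2 * Nc * n := by
  rw [decodingPairs, card_image_of_injective _ fun _ _ h => congrArg Prod.fst h,
    card_activeUsers]

variable {Nc L n}

def uplinkScheme {K : ℕ} (hn : n * (2 * Nc + L) ≤ K) : UplinkScheme K L (cellAssoc Nc L n) where
  D := decodingPairs Nc L n
  lt p q := decodingRank Nc L p.1 < decodingRank Nc L q.1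
  lt_irrefl _ _ := lt_irrefl _
  lt_trans _ _ _ _ _ _ := lt_trans
  lt_total := by
    simp only [decodingPairs, forall_mem_image, ne_eq]
    exact fun i hi i' hi' hne => lt_or_gt_of_ne fun h => hne (by rw [decodingRank_injOn hi hi' h])
  mem_range := by
    simp only [decodingPairs, forall_mem_image]
    exact fun i hi =>
      ⟨activeUsers_subset_Icc hn hi, cellAssoc_subset_Icc hn i (decodingBS_mem_cellAssoc hi)⟩
  assoc := by
    simp only [decodingPairs, forall_mem_image]
    exact fun i hi => decodingBS_mem_cellAssoc hi
  conn := by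
    simp only [decodingPairs, forall_mem_image]
    exact fun i hi => connected_decodingBS hi
  distinct := by
    simp only [decodingPairs, forall_mem_image, ne_eq]
    intro i hi i' hi' hne
    have hii' : i ≠ i' := fun h => hne (by rw [h])
    exact ⟨hii', fun h => hii' (decodingBS_injOn hi hi' h)⟩
  zf := by
    simp only [decodingPairs, forall_mem_image]
    exact fun i hi i' hi' hne hc =>
      ⟨decodingBS_mem_cellAssoc_of_connected hi hi' hc,
        decodingRank_lt_of_connected hi hi' hne hc⟩

def downlinkScheme {K : ℕ} (hn : n * (2 * Nc + L) ≤ K) :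
    DownlinkScheme K L (cellAssoc Nc L n) where
  A := activeUsers Nc L n
  T := transmitters Nc L
  A_sub := activeUsers_subset_Icc hn
  T_sub _ := transmitters_subset_cellAssoc
  T_nonempty _ hi := ⟨_, decodingBS_mem_transmitters_self hi⟩
  T_conn _ hi := ⟨_, decodingBS_mem_transmitters_self hi, connected_decodingBS hi⟩
  matching _ hi := ⟨decodingBS Nc L,
    fun _ hr ⟨_, hj, hc⟩ =>
      ⟨decodingBS_mem_transmitters hi hr hj hc, connected_decodingBS hr⟩,
    fun _ hr _ hs _ _ h => decodingBS_injOn hr hs h⟩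

end BlockScheme

open BlockScheme

theorem joint_low_range_achievable_general (K L Nc : ℕ) :
    ∃ C : ℕ → Finset ℕ, IsCellAssoc K Nc C ∧
      (∃ S : UplinkScheme K L C, 2 * Nc * (K / (2 * Nc + L)) ≤ S.D.card) ∧
      (∃ T : DownlinkScheme K L C, 2 * Nc * (K / (2 * Nc + L)) ≤ T.A.card) := by
  have hn : K / (2 * Nc + L) * (2 * Nc + L) ≤ K := Nat.div_mul_le_self K _
  exact ⟨cellAssoc Nc L _, fun i _ => ⟨cellAssoc_subset_Icc hn i, card_cellAssoc_le i⟩,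
    ⟨uplinkScheme hn, (card_decodingPairs Nc L _).ge⟩,
    ⟨downlinkScheme hn, (card_activeUsers Nc L _).ge⟩⟩

/-- Inner bound of Theorem 2 for `1 ≤ Nc ≤ L`: a single shared cell association
simultaneously admits an uplink zero-forcing scheme with at least
`2Nc·⌊K/(2Nc+L)⌋` decoding pairs and a downlink zero-forcing scheme with at least
`2Nc·⌊K/(2Nc+L)⌋` active receivers. -/
theorem joint_low_range_achievable (K L Nc : ℕ) (hK : 0 < K) (hL : 0 < L)
    (h1 : 1 ≤ Nc) (h2 : Nc ≤ L) :
    ∃ C : ℕ → Finset ℕ, IsCellAssoc K Nc C ∧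
      (∃ S : UplinkScheme K L C, 2 * Nc * (K / (2 * Nc + L)) ≤ S.D.card) ∧
      (∃ T : DownlinkScheme K L C, 2 * Nc * (K / (2 * Nc + L)) ≤ T.A.card) :=
  joint_low_range_achievable_general K L Nc
end

section
/- If N_c ≥ L + 1 and κ = ⌈(L+1)/2⌉ + N_c − (L+1), then there exists a single cell association C_1,…,C_K with |C_i| ≤ N_c for all i which is a full coverage association ({max(1, i−L),…,i} ⊆ C_i for all i), and which simultaneously admits a combinatorial uplink zero-forcing scheme in which every mobile terminal is active (|D| = K) and a combinatorial downlink zero-forcing scheme with at least 2κ·⌊K/(2κ+L)⌋ active receivers. (Inner bound of Theorem 2 for N_c ≥ L + 1: average uplink-downlink zero-forcing per-user DoF at least (1/2)(1 + 2κ/(2κ+L)).) -/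
/-!
Uplink: under full coverage, decoding each MT `i` at its own BS `i`, with pairs ordered by
decreasing index, is a zero-forcing scheme, since every other decoding BS connected to MT `i`
has a smaller index.

Downlink: cut the line into blocks of length `2κ + L`. In a block with offset `o`, the BSs
`(o, o + κ]` serve the receivers `(o + ⌊L/2⌋, o + ⌊L/2⌋ + κ]` and the BSs
`(o + κ + ⌊L/2⌋, o + 2κ + ⌊L/2⌋]` serve `(o + κ + L, o + 2κ + L]`. The gaps between served runs
are wide enough that every active receiver hearing a transmit window is one that the window
serves, so shifting by `⌊L/2⌋` resp. `⌈L/2⌉` is a saturating matching. A served receiver is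
associated with its `L + 1` connected BSs and its transmit window, which together span at most
`κ + ⌈L/2⌉ = N_c` BSs; this is where the value of `κ` comes from.
-/

open Finset

theorem exists_uplinkScheme_card_eq_of_fullCoverage {K L : ℕ} {C : ℕ → Finset ℕ}
    (hC : FullCoverage K L C) : ∃ S : UplinkScheme K L C, S.D.card = K := by
  refine ⟨⟨(Icc 1 K).diag, fun p q => q.1 < p.1, ?_, ?_, ?_, ?_, ?_, ?_, ?_, ?_⟩, ?_⟩
  all_goals simp only [mem_diag, mem_Icc, Prod.forall, Connected, ne_eq, Prod.mk.injEq]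
  · intro _ _ _; exact lt_irrefl _
  · intro _ _ _ _ _ _ _ _ _ h₁ h₂; exact h₂.trans h₁
  · rintro a _ ⟨-, rfl⟩ c _ ⟨-, rfl⟩ h; omega
  · rintro a _ ⟨ha, rfl⟩; exact ⟨ha, ha⟩
  · rintro a _ ⟨ha, rfl⟩; exact hC a (mem_Icc.mpr ha) (by simp only [mem_Icc]; omega)
  · rintro a _ ⟨-, rfl⟩; omega
  · rintro a _ ⟨-, rfl⟩ c _ ⟨-, rfl⟩ h; omega
  · rintro a _ ⟨ha, rfl⟩ c _ ⟨hc, rfl⟩ hne ⟨hca, hac⟩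
    exact ⟨hC a (mem_Icc.mpr ha) (by simp only [mem_Icc]; omega), by omega⟩
  · rw [diag_card, Nat.card_Icc, Nat.add_sub_cancel]

theorem exists_downlinkScheme_of_shift {K L : ℕ} {C : ℕ → Finset ℕ} {A : Finset ℕ}
    {T : ℕ → Finset ℕ} (hA : A ⊆ Icc 1 K) (hT : ∀ i ∈ A, T i ⊆ C i)
    (hshift : ∀ i ∈ A, ∃ d ≤ L, i ∈ (T i).image (· + d) ∧
      ∀ r ∈ A, (∃ j ∈ T i, Connected L r j) → r ∈ (T i).image (· + d)) :
    ∃ S : DownlinkScheme K L C, S.A = A := by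
  refine ⟨⟨A, T, hA, hT, fun i hi => ?_, fun i hi => ?_, fun i hi => ?_⟩, rfl⟩ <;>
    obtain ⟨d, hdL, hself, hV⟩ := hshift i hi
  · obtain ⟨j, hj, -⟩ := mem_image.mp hself
    exact ⟨j, hj⟩
  · obtain ⟨j, hj, hji⟩ := mem_image.mp hself
    exact ⟨j, hj, by simp only [Connected]; omega⟩
  · refine ⟨fun r => r - d, fun r hr hrV => ?_, fun r hr s hs hrV hsV hrs => ?_⟩
    · obtain ⟨j, hj, rfl⟩ := mem_image.mp (hV r hr hrV)
      exact ⟨by simpa using hj, by simp only [Connected]; omega⟩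
    · obtain ⟨j, -, rfl⟩ := mem_image.mp (hV r hr hrV)
      obtain ⟨k, -, rfl⟩ := mem_image.mp (hV s hs hsV)
      simp only [Nat.add_sub_cancel] at hrs
      rw [hrs]

theorem mul_add_le_mul_of_lt {b b' m : ℕ} (h : b < b') : b * m + m ≤ b' * m := by
  simpa only [Nat.succ_mul] using Nat.mul_le_mul_right m h

theorem sub_one_div_eq_of_mem_Ioc {i b m : ℕ} (h : i ∈ Ioc (b * m) (b * m + m)) :
    (i - 1) / m = b := by
  rw [mem_Ioc] at h
  exact Nat.div_eq_of_lt_le (by omega) (by rw [add_one_mul]; omega)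

theorem card_Icc_union_Ioc_le (a b c d : ℕ) :
    (Icc a b ∪ Ioc c d).card ≤ max b d + 1 - min a (c + 1) := by
  calc (Icc a b ∪ Ioc c d).card ≤ (Icc (min a (c + 1)) (max b d)).card := by
        refine card_le_card (union_subset ?_ ?_) <;> intro x <;> simp only [mem_Icc, mem_Ioc] <;>
          omega
    _ = max b d + 1 - min a (c + 1) := Nat.card_Icc _ _

namespace BlockScheme

variable (K L κ : ℕ)

def txA (b : ℕ) : Finset ℕ := Ioc (b * (2 * κ + L)) (b * (2 * κ + L) + κ)

def rxA (b : ℕ) : Finset ℕ := Ioc (b * (2 * κ + L) + L / 2) (b * (2 * κ + L) + L / 2 + κ)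

def txB (b : ℕ) : Finset ℕ :=
  Ioc (b * (2 * κ + L) + κ + L / 2) (b * (2 * κ + L) + 2 * κ + L / 2)

def rxB (b : ℕ) : Finset ℕ := Ioc (b * (2 * κ + L) + κ + L) (b * (2 * κ + L) + 2 * κ + L)

def active : Finset ℕ := (range (K / (2 * κ + L))).biUnion fun b => rxA L κ b ∪ rxB L κ b

def tx (i : ℕ) : Finset ℕ :=
  if i ∈ rxA L κ ((i - 1) / (2 * κ + L)) then txA L κ ((i - 1) / (2 * κ + L))
  else txB L κ ((i - 1) / (2 * κ + L))

def assoc (i : ℕ) : Finset ℕ := Icc (max 1 (i - L)) i ∪ if i ∈ active K L κ then tx L κ i else ∅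

variable {K L κ}

theorem mem_active {i : ℕ} :
    i ∈ active K L κ ↔ ∃ b < K / (2 * κ + L), i ∈ rxA L κ b ∨ i ∈ rxB L κ b := by
  simp only [active, mem_biUnion, mem_range, mem_union]

theorem add_le_of_lt_div {b : ℕ} (hb : b < K / (2 * κ + L)) :
    b * (2 * κ + L) + (2 * κ + L) ≤ K :=
  (mul_add_le_mul_of_lt hb).trans (Nat.div_mul_le_self K _)

theorem tx_of_mem_rxA {i b : ℕ} (h : i ∈ rxA L κ b) : tx L κ i = txA L κ b := by
  have hb : (i - 1) / (2 * κ + L) = b :=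
    sub_one_div_eq_of_mem_Ioc (by simp only [rxA, mem_Ioc] at h ⊢; omega)
  rw [tx, hb, if_pos h]

theorem tx_of_mem_rxB {i b : ℕ} (h : i ∈ rxB L κ b) : tx L κ i = txB L κ b := by
  have hb : (i - 1) / (2 * κ + L) = b :=
    sub_one_div_eq_of_mem_Ioc (by simp only [rxB, mem_Ioc] at h ⊢; omega)
  rw [tx, hb, if_neg (by simp only [rxA, rxB, mem_Ioc] at h ⊢; omega)]

theorem image_txA (b : ℕ) : (txA L κ b).image (· + L / 2) = rxA L κ b := by
  rw [txA, rxA, image_add_right_Ioc]; congr 1; omega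

theorem image_txB (b : ℕ) : (txB L κ b).image (· + (L - L / 2)) = rxB L κ b := by
  rw [txB, rxB, image_add_right_Ioc]; congr 1 <;> omega

theorem mem_rxA_of_connected {r j b : ℕ} (hr : r ∈ active K L κ) (hj : j ∈ txA L κ b)
    (hrj : Connected L r j) : r ∈ rxA L κ b := by
  obtain ⟨b', -, hr'⟩ := mem_active.mp hr
  simp only [txA, rxA, rxB, mem_Ioc, Connected] at hj hrj hr' ⊢
  rcases lt_trichotomy b b' with h | rfl | h
  · have := mul_add_le_mul_of_lt (m := 2 * κ + L) h; omega
  · omega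
  · have := mul_add_le_mul_of_lt (m := 2 * κ + L) h; omega

theorem mem_rxB_of_connected {r j b : ℕ} (hr : r ∈ active K L κ) (hj : j ∈ txB L κ b)
    (hrj : Connected L r j) : r ∈ rxB L κ b := by
  obtain ⟨b', -, hr'⟩ := mem_active.mp hr
  simp only [txB, rxA, rxB, mem_Ioc, Connected] at hj hrj hr' ⊢
  rcases lt_trichotomy b b' with h | rfl | h
  · have := mul_add_le_mul_of_lt (m := 2 * κ + L) h; omega
  · omega
  · have := mul_add_le_mul_of_lt (m := 2 * κ + L) h; omega

theorem exists_shift {i : ℕ} (hi : i ∈ active K L κ) :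
    ∃ d ≤ L, i ∈ (tx L κ i).image (· + d) ∧
      ∀ r ∈ active K L κ, (∃ j ∈ tx L κ i, Connected L r j) → r ∈ (tx L κ i).image (· + d) := by
  obtain ⟨b, -, hiA | hiB⟩ := mem_active.mp hi
  · refine ⟨L / 2, Nat.div_le_self L 2, ?_⟩
    rw [tx_of_mem_rxA hiA, image_txA]
    exact ⟨hiA, fun r hr ⟨j, hj, hrj⟩ => mem_rxA_of_connected hr hj hrj⟩
  · refine ⟨L - L / 2, Nat.sub_le L _, ?_⟩
    rw [tx_of_mem_rxB hiB, image_txB]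
    exact ⟨hiB, fun r hr ⟨j, hj, hrj⟩ => mem_rxB_of_connected hr hj hrj⟩

theorem card_active : (active K L κ).card = 2 * κ * (K / (2 * κ + L)) := by
  have hblock (b : ℕ) : (rxA L κ b ∪ rxB L κ b).card = 2 * κ := by
    rw [card_union_of_disjoint (disjoint_left.mpr fun x hA hB => by
      simp only [rxA, rxB, mem_Ioc] at hA hB; omega), rxA, rxB, Nat.card_Ioc, Nat.card_Ioc]
    omega
  rw [active, card_biUnion, sum_congr rfl fun b _ => hblock b, sum_const, card_range,
    smul_eq_mul, mul_comm]
  intro b _ b' _ hne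
  refine disjoint_left.mpr fun x hx hx' => ?_
  simp only [rxA, rxB, mem_union, mem_Ioc] at hx hx'
  rcases hne.lt_or_gt with h | h
  · have := mul_add_le_mul_of_lt (m := 2 * κ + L) h; omega
  · have := mul_add_le_mul_of_lt (m := 2 * κ + L) h; omega

theorem fullCoverage_assoc : FullCoverage K L (assoc K L κ) :=
  fun _ _ => subset_union_left

theorem card_assoc_le (hκ : L / 2 < κ) (i : ℕ) : (assoc K L κ i).card ≤ κ + (L - L / 2) := by
  by_cases hi : i ∈ active K L κ
  · obtain ⟨b, -, hiA | hiB⟩ := mem_active.mp hi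
    · rw [assoc, if_pos hi, tx_of_mem_rxA hiA, txA]
      refine (card_Icc_union_Ioc_le _ _ _ _).trans ?_
      simp only [rxA, mem_Ioc] at hiA; omega
    · rw [assoc, if_pos hi, tx_of_mem_rxB hiB, txB]
      refine (card_Icc_union_Ioc_le _ _ _ _).trans ?_
      simp only [rxB, mem_Ioc] at hiB; omega
  · rw [assoc, if_neg hi, union_empty, Nat.card_Icc]
    omega

theorem active_subset : active K L κ ⊆ Icc 1 K := by
  intro i hi
  obtain ⟨b, hb, hi' | hi'⟩ := mem_active.mp hi <;>
    · have := add_le_of_lt_div hb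
      simp only [rxA, rxB, mem_Ioc] at hi'; simp only [mem_Icc]; omega

theorem tx_subset {i : ℕ} (hi : i ∈ active K L κ) : tx L κ i ⊆ Icc 1 K := by
  obtain ⟨b, hb, hiA | hiB⟩ := mem_active.mp hi
  · rw [tx_of_mem_rxA hiA, txA]
    have := add_le_of_lt_div hb
    intro x; simp only [mem_Ioc, mem_Icc]; omega
  · rw [tx_of_mem_rxB hiB, txB]
    have := add_le_of_lt_div hb
    intro x; simp only [mem_Ioc, mem_Icc]; omega

theorem isCellAssoc_assoc (hκ : L / 2 < κ) : IsCellAssoc K (κ + (L - L / 2)) (assoc K L κ) := by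
  refine fun i hi => ⟨union_subset ?_ ?_, card_assoc_le hκ i⟩
  · intro x; simp only [mem_Icc] at hi ⊢; omega
  · split_ifs with hA
    · exact tx_subset hA
    · exact empty_subset _

theorem exists_downlinkScheme : ∃ S : DownlinkScheme K L (assoc K L κ), S.A = active K L κ :=
  exists_downlinkScheme_of_shift active_subset
    (fun i hi => by rw [assoc, if_pos hi]; exact subset_union_right) fun _ => exists_shift

end BlockScheme

theorem joint_high_range_achievable_general (K L Nc : ℕ)
    (hNc : L + 1 ≤ Nc) (kappa : ℕ) (hkappa : kappa = (L + 2) / 2 + Nc - (L + 1)) :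
    ∃ C : ℕ → Finset ℕ, IsCellAssoc K Nc C ∧ FullCoverage K L C ∧
      (∃ S : UplinkScheme K L C, S.D.card = K) ∧
      (∃ T : DownlinkScheme K L C, 2 * kappa * (K / (2 * kappa + L)) ≤ T.A.card) := by
  have hκ : L / 2 < kappa := by omega
  have hNc' : Nc = kappa + (L - L / 2) := by omega
  obtain ⟨T, hT⟩ := BlockScheme.exists_downlinkScheme (K := K) (L := L) (κ := kappa)
  refine ⟨BlockScheme.assoc K L kappa, hNc' ▸ BlockScheme.isCellAssoc_assoc hκ,
    BlockScheme.fullCoverage_assoc,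
    exists_uplinkScheme_card_eq_of_fullCoverage BlockScheme.fullCoverage_assoc, T, ?_⟩
  rw [hT, BlockScheme.card_active]

/-- Inner bound of Theorem 2 for `Nc ≥ L + 1` (`κ = ⌈(L+1)/2⌉ + Nc - (L+1)`): a single
full coverage cell association simultaneously admits an uplink zero-forcing scheme in
which every mobile terminal is active and a downlink zero-forcing scheme with at least
`2κ·⌊K/(2κ+L)⌋` active receivers. -/
theorem joint_high_range_achievable (K L Nc : ℕ) (hK : 0 < K) (hL : 0 < L)
    (hNc : L + 1 ≤ Nc) (kappa : ℕ) (hkappa : kappa = (L + 2) / 2 + Nc - (L + 1)) :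
    ∃ C : ℕ → Finset ℕ, IsCellAssoc K Nc C ∧ FullCoverage K L C ∧
      (∃ S : UplinkScheme K L C, S.D.card = K) ∧
      (∃ T : DownlinkScheme K L C, 2 * kappa * (K / (2 * kappa + L)) ≤ T.A.card) :=
  joint_high_range_achievable_general K L Nc hNc kappa hkappa
end
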